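/- arXiv:2311.02426 — 6 statements merged into one kernel-verified Lean document; each statement's English description precedes it below -/
import Mathlib

section
/- Fix 1 ≤ t < T and θ_t, θ_{t+1} ∈ ℝ^d. Suppose (x_t, y_t) is a global minimax point over 𝒳 × 𝒴 of (x, y) ↦ Σ_{n<t} L̄_n(x, y) − θ_t^⊤x, (x_{t+1}, y_{t+1}) is a global minimax point over 𝒳 × 𝒴 of (x, y) ↦ Σ_{n<t+1} L̄_n(x, y) − θ_{t+1}^⊤x, y_t′ maximizes y ↦ Σ_{n<t+1} L̄_n(x_t, y) over 𝒴, and y_t″ maximizes y ↦ Σ_{n<t} L̄_n(x_{t+1}, y) over 𝒴. If |L̄_t(x, y)| ≤ B_L for all (x, y) ∈ 𝒳 × 𝒴, then (θ_t − θ_{t+1})^⊤(x_t − x_{t+1}) ≥ L̄_t(x_{t+1}, y_t″) − L̄_t(x_t, y_t′) ≥ −2 B_L. -/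
open Finset

/-- key inequality for Lemma 6: under the FTDPL minimax hypotheses,
`(θ_t − θ_{t+1})ᵀ(x_t − x_{t+1}) ≥ L̄_t(x_{t+1}, y_t″) − L̄_t(x_t, y_t′) ≥ −2 B_L`. -/
theorem stmt_6
    (d I T : ℕ) (hd : 0 < d) (hI : 0 < I) (hT : 0 < T)
    (𝒳 : Set (Fin d → ℝ)) (h𝒳ne : 𝒳.Nonempty) (h𝒳cp : IsCompact 𝒳)
    (ymax : ℝ) (hymax : 0 < ymax)
    (𝒴 : Set (Fin I → ℝ)) (h𝒴 : 𝒴 = {y | ∀ i, y i ∈ Set.Icc (0 : ℝ) ymax})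
    (G0 : ℝ) (hG0 : 0 < G0)
    (f : ℕ → (Fin d → ℝ) → ℝ)
    (c : Fin I → ℕ → (Fin d → ℝ) → ℝ)
    (b : Fin I → ℝ) (hb : ∀ i, 0 ≤ b i)
    (hf : ∀ t, 1 ≤ t → t ≤ T → ∀ x x' : Fin d → ℝ,
      |f t x - f t x'| ≤ G0 * ∑ j, |x j - x' j|)
    (hc : ∀ i t, 1 ≤ t → t ≤ T → ∀ x x' : Fin d → ℝ,
      |c i t x - c i t x'| ≤ G0 * ∑ j, |x j - x' j|)
    (lam : ℝ) (hlam : 0 < lam)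
    (L : ℕ → (Fin d → ℝ) → (Fin I → ℝ) → ℝ)
    (hL : ∀ t x y, L t x y = f t x + ∑ i, y i * (c i t x - b i))
    (Lbar : ℕ → (Fin d → ℝ) → (Fin I → ℝ) → ℝ)
    (hLbar : ∀ n x y, Lbar n x y
      = L n x y + (lam / (n : ℝ) ^ ((1 : ℝ) / 9)) * ∑ i, Real.log (y i + 1))
    (t : ℕ) (h1t : 1 ≤ t) (htT : t < T)
    (θt θt1 : Fin d → ℝ)
    (xt : Fin d → ℝ) (yt : Fin I → ℝ) (hxt : xt ∈ 𝒳) (hyt : yt ∈ 𝒴)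
    -- `(x_t, y_t)` is a global minimax point of `(x,y) ↦ Σ_{n<t} L̄ₙ(x,y) − θₜᵀx`
    (hmmt1 : ∀ y ∈ 𝒴,
      (∑ n ∈ Finset.Ico 1 t, Lbar n xt y) - ∑ j, θt j * xt j
        ≤ (∑ n ∈ Finset.Ico 1 t, Lbar n xt yt) - ∑ j, θt j * xt j)
    (hmmt2 : ∀ x ∈ 𝒳,
      (∑ n ∈ Finset.Ico 1 t, Lbar n xt yt) - ∑ j, θt j * xt j
        ≤ sSup ((fun y' => (∑ n ∈ Finset.Ico 1 t, Lbar n x y') - ∑ j, θt j * x j) '' 𝒴))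
    (xt1 : Fin d → ℝ) (yt1 : Fin I → ℝ) (hxt1 : xt1 ∈ 𝒳) (hyt1 : yt1 ∈ 𝒴)
    -- `(x_{t+1}, y_{t+1})` is a global minimax point of `(x,y) ↦ Σ_{n<t+1} L̄ₙ(x,y) − θ_{t+1}ᵀx`
    (hmmt1' : ∀ y ∈ 𝒴,
      (∑ n ∈ Finset.Ico 1 (t + 1), Lbar n xt1 y) - ∑ j, θt1 j * xt1 j
        ≤ (∑ n ∈ Finset.Ico 1 (t + 1), Lbar n xt1 yt1) - ∑ j, θt1 j * xt1 j)
    (hmmt2' : ∀ x ∈ 𝒳,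
      (∑ n ∈ Finset.Ico 1 (t + 1), Lbar n xt1 yt1) - ∑ j, θt1 j * xt1 j
        ≤ sSup ((fun y' => (∑ n ∈ Finset.Ico 1 (t + 1), Lbar n x y') - ∑ j, θt1 j * x j) '' 𝒴))
    -- `y_t′` maximizes `y ↦ Σ_{n<t+1} L̄ₙ(x_t, y)` over `𝒴`
    (yt' : Fin I → ℝ) (hyt' : yt' ∈ 𝒴)
    (hyt'max : ∀ y ∈ 𝒴, ∑ n ∈ Finset.Ico 1 (t + 1), Lbar n xt y
      ≤ ∑ n ∈ Finset.Ico 1 (t + 1), Lbar n xt yt')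
    -- `y_t″` maximizes `y ↦ Σ_{n<t} L̄ₙ(x_{t+1}, y)` over `𝒴`
    (yt'' : Fin I → ℝ) (hyt'' : yt'' ∈ 𝒴)
    (hyt''max : ∀ y ∈ 𝒴, ∑ n ∈ Finset.Ico 1 t, Lbar n xt1 y
      ≤ ∑ n ∈ Finset.Ico 1 t, Lbar n xt1 yt'')
    (BL : ℝ) (hBL : ∀ x ∈ 𝒳, ∀ y ∈ 𝒴, |Lbar t x y| ≤ BL) :
    Lbar t xt1 yt'' - Lbar t xt yt' ≤ ∑ j, (θt j - θt1 j) * (xt j - xt1 j) ∧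
      -(2 * BL) ≤ Lbar t xt1 yt'' - Lbar t xt yt' := by
  have hsup1 : sSup ((fun y' => (∑ n ∈ Finset.Ico 1 t, Lbar n xt1 y') - ∑ j, θt j * xt1 j) '' 𝒴)
      ≤ (∑ n ∈ Finset.Ico 1 t, Lbar n xt1 yt'') - ∑ j, θt j * xt1 j := by
    apply csSup_le (Set.Nonempty.image _ ⟨yt'', hyt''⟩)
    rintro _ ⟨y, hy, rfl⟩
    exact sub_le_sub_right (hyt''max y hy) _
  have hsup2 : sSup ((fun y' => (∑ n ∈ Finset.Ico 1 (t + 1), Lbar n xt y') - ∑ j, θt1 j * xt j) '' 𝒴)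
      ≤ (∑ n ∈ Finset.Ico 1 (t + 1), Lbar n xt yt') - ∑ j, θt1 j * xt j := by
    apply csSup_le (Set.Nonempty.image _ ⟨yt', hyt'⟩)
    rintro _ ⟨y, hy, rfl⟩
    exact sub_le_sub_right (hyt'max y hy) _
  have hA : (∑ n ∈ Finset.Ico 1 t, Lbar n xt yt') - ∑ j, θt j * xt j
      ≤ (∑ n ∈ Finset.Ico 1 t, Lbar n xt1 yt'') - ∑ j, θt j * xt1 j :=
    (hmmt1 yt' hyt').trans ((hmmt2 xt1 hxt1).trans hsup1)
  have hB : (∑ n ∈ Finset.Ico 1 (t + 1), Lbar n xt1 yt'') - ∑ j, θt1 j * xt1 j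
      ≤ (∑ n ∈ Finset.Ico 1 (t + 1), Lbar n xt yt') - ∑ j, θt1 j * xt j :=
    (hmmt1' yt'' hyt'').trans ((hmmt2' xt hxt).trans hsup2)
  have hsplit1 : ∑ n ∈ Finset.Ico 1 (t + 1), Lbar n xt1 yt''
      = (∑ n ∈ Finset.Ico 1 t, Lbar n xt1 yt'') + Lbar t xt1 yt'' :=
    Finset.sum_Ico_succ_top h1t _
  have hsplit2 : ∑ n ∈ Finset.Ico 1 (t + 1), Lbar n xt yt'
      = (∑ n ∈ Finset.Ico 1 t, Lbar n xt yt') + Lbar t xt yt' :=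
    Finset.sum_Ico_succ_top h1t _
  have hdot : ∑ j, (θt j - θt1 j) * (xt j - xt1 j)
      = (∑ j, θt j * xt j) - (∑ j, θt j * xt1 j) - (∑ j, θt1 j * xt j)
        + (∑ j, θt1 j * xt1 j) := by
    simp only [sub_mul, mul_sub, Finset.sum_sub_distrib]; ring
  have h1 := abs_le.mp (hBL xt1 hxt1 yt'' hyt'')
  have h2 := abs_le.mp (hBL xt hxt yt' hyt')
  constructor
  · rw [hdot]; rw [hsplit1, hsplit2] at hB; linarith
  · linarith [h1.1, h2.2]
end

section
/- Fix 1 ≤ t < T and θ_t, θ_{t+1} ∈ ℝ^d. Suppose (x_t, y_t) is a global minimax point over 𝒳 × 𝒴 of (x, y) ↦ Σ_{n<t} L̄_n(x, y) − θ_t^⊤x, (x_{t+1}, y_{t+1}) is a global minimax point over 𝒳 × 𝒴 of (x, y) ↦ Σ_{n<t+1} L̄_n(x, y) − θ_{t+1}^⊤x, and y_t″ maximizes y ↦ Σ_{n<t} L̄_n(x_{t+1}, y) over 𝒴. Then Σ_{n<t+1} L̄_n(x_{t+1}, y_{t+1}) − θ_{t+1}^⊤x_{t+1} ≥ [Σ_{n<t}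 L̄_n(x_t, y_t) − θ_t^⊤x_t] + (θ_t − θ_{t+1})^⊤x_{t+1} + L̄_t(x_{t+1}, y_t″). -/
/-!
Both minimax values are compared with the payoffs at `(x_{t+1}, y_t″)`. As `y_t″` is a best
response to `x_{t+1}` in round `t`, the round-`t` upper value at `x_{t+1}` is attained there,
which bounds the round-`t` value from above; the round-`(t+1)` value is at least its objective at
`(x_{t+1}, y_t″)`, i.e. the round-`t` objective there plus `L̄_t(x_{t+1}, y_t″)`, up to the change
of the linear term from `θ_t` to `θ_{t+1}`.
-/

open Finset

theorem csSup_image_le_apply_of_forall_le {α β : Type*} [ConditionallyCompleteLattice β]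
    {s : Set α} {g : α → β} {a : α} (ha : a ∈ s) (hmax : ∀ y ∈ s, g y ≤ g a) :
    sSup (g '' s) ≤ g a :=
  csSup_le ⟨g a, a, ha, rfl⟩ <| Set.forall_mem_image.2 hmax

theorem stmt_7_general
    (d I : ℕ)
    (𝒳 : Set (Fin d → ℝ))
    (𝒴 : Set (Fin I → ℝ))
    (Lbar : ℕ → (Fin d → ℝ) → (Fin I → ℝ) → ℝ)
    (t : ℕ) (h1t : 1 ≤ t)
    (θt θt1 : Fin d → ℝ)
    (xt : Fin d → ℝ) (yt : Fin I → ℝ)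
    -- `(x_t, y_t)` is a global minimax point of `(x,y) ↦ Σ_{n<t} L̄ₙ(x,y) − θₜᵀx`
    (hmmt2 : ∀ x ∈ 𝒳,
      (∑ n ∈ Finset.Ico 1 t, Lbar n xt yt) - ∑ j, θt j * xt j
        ≤ sSup ((fun y' => (∑ n ∈ Finset.Ico 1 t, Lbar n x y') - ∑ j, θt j * x j) '' 𝒴))
    (xt1 : Fin d → ℝ) (yt1 : Fin I → ℝ) (hxt1 : xt1 ∈ 𝒳)
    -- `(x_{t+1}, y_{t+1})` is a global minimax point of `(x,y) ↦ Σ_{n<t+1} L̄ₙ(x,y) − θ_{t+1}ᵀx`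
    (hmmt1' : ∀ y ∈ 𝒴,
      (∑ n ∈ Finset.Ico 1 (t + 1), Lbar n xt1 y) - ∑ j, θt1 j * xt1 j
        ≤ (∑ n ∈ Finset.Ico 1 (t + 1), Lbar n xt1 yt1) - ∑ j, θt1 j * xt1 j)
    -- `y_t″` maximizes `y ↦ Σ_{n<t} L̄ₙ(x_{t+1}, y)` over `𝒴`
    (yt'' : Fin I → ℝ) (hyt'' : yt'' ∈ 𝒴)
    (hyt''max : ∀ y ∈ 𝒴, ∑ n ∈ Finset.Ico 1 t, Lbar n xt1 y
      ≤ ∑ n ∈ Finset.Ico 1 t, Lbar n xt1 yt'') :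
    ((∑ n ∈ Finset.Ico 1 t, Lbar n xt yt) - ∑ j, θt j * xt j)
        + (∑ j, (θt j - θt1 j) * xt1 j) + Lbar t xt1 yt''
      ≤ (∑ n ∈ Finset.Ico 1 (t + 1), Lbar n xt1 yt1) - ∑ j, θt1 j * xt1 j := by
  have hprev : (∑ n ∈ Ico 1 t, Lbar n xt yt) - ∑ j, θt j * xt j
      ≤ (∑ n ∈ Ico 1 t, Lbar n xt1 yt'') - ∑ j, θt j * xt1 j :=
    (hmmt2 xt1 hxt1).trans <| csSup_image_le_apply_of_forall_le hyt'' fun y hy ↦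
      sub_le_sub_right (hyt''max y hy) _
  have hnext := hmmt1' yt'' hyt''
  rw [sum_Ico_succ_top h1t] at hnext
  simp only [sub_mul, sum_sub_distrib]
  linarith

/-- inequality (5) of the paper: under the FTDPL minimax hypotheses,
`Σ_{n<t+1} L̄ₙ(x_{t+1},y_{t+1}) − θ_{t+1}ᵀx_{t+1}
  ≥ [Σ_{n<t} L̄ₙ(x_t,y_t) − θ_tᵀx_t] + (θ_t − θ_{t+1})ᵀx_{t+1} + L̄_t(x_{t+1}, y_t″)`. -/
theorem stmt_7
    (d I T : ℕ) (hd : 0 < d) (hI : 0 < I) (hT : 0 < T)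
    (𝒳 : Set (Fin d → ℝ)) (h𝒳ne : 𝒳.Nonempty) (h𝒳cp : IsCompact 𝒳)
    (ymax : ℝ) (hymax : 0 < ymax)
    (𝒴 : Set (Fin I → ℝ)) (h𝒴 : 𝒴 = {y | ∀ i, y i ∈ Set.Icc (0 : ℝ) ymax})
    (G0 : ℝ) (hG0 : 0 < G0)
    (f : ℕ → (Fin d → ℝ) → ℝ)
    (c : Fin I → ℕ → (Fin d → ℝ) → ℝ)
    (b : Fin I → ℝ) (hb : ∀ i, 0 ≤ b i)
    (hf : ∀ t, 1 ≤ t → t ≤ T → ∀ x x' : Fin d → ℝ,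
      |f t x - f t x'| ≤ G0 * ∑ j, |x j - x' j|)
    (hc : ∀ i t, 1 ≤ t → t ≤ T → ∀ x x' : Fin d → ℝ,
      |c i t x - c i t x'| ≤ G0 * ∑ j, |x j - x' j|)
    (lam : ℝ) (hlam : 0 < lam)
    (L : ℕ → (Fin d → ℝ) → (Fin I → ℝ) → ℝ)
    (hL : ∀ t x y, L t x y = f t x + ∑ i, y i * (c i t x - b i))
    (Lbar : ℕ → (Fin d → ℝ) → (Fin I → ℝ) → ℝ)
    (hLbar : ∀ n x y, Lbar n x y
      = L n x y + (lam / (n : ℝ) ^ ((1 : ℝ) / 9)) * ∑ i, Real.log (y i + 1))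
    (t : ℕ) (h1t : 1 ≤ t) (htT : t < T)
    (θt θt1 : Fin d → ℝ)
    (xt : Fin d → ℝ) (yt : Fin I → ℝ) (hxt : xt ∈ 𝒳) (hyt : yt ∈ 𝒴)
    -- `(x_t, y_t)` is a global minimax point of `(x,y) ↦ Σ_{n<t} L̄ₙ(x,y) − θₜᵀx`
    (hmmt1 : ∀ y ∈ 𝒴,
      (∑ n ∈ Finset.Ico 1 t, Lbar n xt y) - ∑ j, θt j * xt j
        ≤ (∑ n ∈ Finset.Ico 1 t, Lbar n xt yt) - ∑ j, θt j * xt j)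
    (hmmt2 : ∀ x ∈ 𝒳,
      (∑ n ∈ Finset.Ico 1 t, Lbar n xt yt) - ∑ j, θt j * xt j
        ≤ sSup ((fun y' => (∑ n ∈ Finset.Ico 1 t, Lbar n x y') - ∑ j, θt j * x j) '' 𝒴))
    (xt1 : Fin d → ℝ) (yt1 : Fin I → ℝ) (hxt1 : xt1 ∈ 𝒳) (hyt1 : yt1 ∈ 𝒴)
    -- `(x_{t+1}, y_{t+1})` is a global minimax point of `(x,y) ↦ Σ_{n<t+1} L̄ₙ(x,y) − θ_{t+1}ᵀx`
    (hmmt1' : ∀ y ∈ 𝒴,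
      (∑ n ∈ Finset.Ico 1 (t + 1), Lbar n xt1 y) - ∑ j, θt1 j * xt1 j
        ≤ (∑ n ∈ Finset.Ico 1 (t + 1), Lbar n xt1 yt1) - ∑ j, θt1 j * xt1 j)
    (hmmt2' : ∀ x ∈ 𝒳,
      (∑ n ∈ Finset.Ico 1 (t + 1), Lbar n xt1 yt1) - ∑ j, θt1 j * xt1 j
        ≤ sSup ((fun y' => (∑ n ∈ Finset.Ico 1 (t + 1), Lbar n x y') - ∑ j, θt1 j * x j) '' 𝒴))
    -- `y_t″` maximizes `y ↦ Σ_{n<t} L̄ₙ(x_{t+1}, y)` over `𝒴`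
    (yt'' : Fin I → ℝ) (hyt'' : yt'' ∈ 𝒴)
    (hyt''max : ∀ y ∈ 𝒴, ∑ n ∈ Finset.Ico 1 t, Lbar n xt1 y
      ≤ ∑ n ∈ Finset.Ico 1 t, Lbar n xt1 yt'') :
    ((∑ n ∈ Finset.Ico 1 t, Lbar n xt yt) - ∑ j, θt j * xt j)
        + (∑ j, (θt j - θt1 j) * xt1 j) + Lbar t xt1 yt''
      ≤ (∑ n ∈ Finset.Ico 1 (t + 1), Lbar n xt1 yt1) - ∑ j, θt1 j * xt1 j :=
  stmt_7_general d I 𝒳 𝒴 Lbar t h1t θt θt1 xt yt hmmt2 xt1 yt1 hxt1 hmmt1' yt'' hyt'' hyt''max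
end

section
/- Fix 2 ≤ t ≤ T + 1. Suppose (x**, y**) is a global minimax point over 𝒳 × 𝒴 of (x, y) ↦ Σ_{n<t} L̄_n(x, y), that x* minimizes x ↦ max_{y∈𝒴} Σ_{n<t} L_n(x, y) over 𝒳, and that y^‡ = (γ_1^‡, …, γ_I^‡) maximizes y ↦ Σ_{n<t} L̄_n(x*, y) over 𝒴. Then Σ_{n<t} [ L_n(x**, y**) − (λ / n^{1/9}) Σ_{i=1}^I log(γ_i^‡ + 1) ] ≤ min_{x∈𝒳} max_{y∈𝒴} Σ_{n<t} L_n(x, y). -/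
open Finset

/-- second inequality of Lemma 9: with `(x**, y**)` a global minimax
point of `Σ_{n<t} L̄ₙ`, `x*` a minimizer of `x ↦ max_{y∈𝒴} Σ_{n<t} Lₙ(x,y)` over `𝒳` and `y^‡`
a maximizer of `y ↦ Σ_{n<t} L̄ₙ(x*, y)` over `𝒴`,
`Σ_{n<t}[Lₙ(x**,y**) − (λ/n^{1/9}) Σᵢ log(γᵢ^‡ + 1)] ≤ min_{x∈𝒳} max_{y∈𝒴} Σ_{n<t} Lₙ(x,y)`. -/
theorem stmt_15
    (d I T : ℕ) (hd : 0 < d) (hI : 0 < I) (hT : 0 < T)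
    (𝒳 : Set (Fin d → ℝ)) (h𝒳ne : 𝒳.Nonempty) (h𝒳cp : IsCompact 𝒳)
    (ymax : ℝ) (hymax : 0 < ymax)
    (𝒴 : Set (Fin I → ℝ)) (h𝒴 : 𝒴 = {y | ∀ i, y i ∈ Set.Icc (0 : ℝ) ymax})
    (G0 : ℝ) (hG0 : 0 < G0)
    (f : ℕ → (Fin d → ℝ) → ℝ)
    (c : Fin I → ℕ → (Fin d → ℝ) → ℝ)
    (b : Fin I → ℝ) (hb : ∀ i, 0 ≤ b i)
    (hf : ∀ t, 1 ≤ t → t ≤ T → ∀ x x' : Fin d → ℝ,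
      |f t x - f t x'| ≤ G0 * ∑ j, |x j - x' j|)
    (hc : ∀ i t, 1 ≤ t → t ≤ T → ∀ x x' : Fin d → ℝ,
      |c i t x - c i t x'| ≤ G0 * ∑ j, |x j - x' j|)
    (lam : ℝ) (hlam : 0 < lam)
    (L : ℕ → (Fin d → ℝ) → (Fin I → ℝ) → ℝ)
    (hL : ∀ t x y, L t x y = f t x + ∑ i, y i * (c i t x - b i))
    (Lbar : ℕ → (Fin d → ℝ) → (Fin I → ℝ) → ℝ)
    (hLbar : ∀ n x y, Lbar n x y
      = L n x y + (lam / (n : ℝ) ^ ((1 : ℝ) / 9)) * ∑ i, Real.log (y i + 1))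
    (t : ℕ) (h2t : 2 ≤ t) (htT : t ≤ T + 1)
    (xss : Fin d → ℝ) (yss : Fin I → ℝ) (hxss : xss ∈ 𝒳) (hyss : yss ∈ 𝒴)
    -- `(x**, y**)` is a global minimax point of `(x,y) ↦ Σ_{n<t} L̄ₙ(x,y)` over `𝒳 × 𝒴`
    (hmm1 : ∀ y ∈ 𝒴,
      ∑ n ∈ Finset.Ico 1 t, Lbar n xss y ≤ ∑ n ∈ Finset.Ico 1 t, Lbar n xss yss)
    (hmm2 : ∀ x ∈ 𝒳,
      ∑ n ∈ Finset.Ico 1 t, Lbar n xss yss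
        ≤ sSup ((fun y' => ∑ n ∈ Finset.Ico 1 t, Lbar n x y') '' 𝒴))
    -- `x*` minimizes `x ↦ max_{y∈𝒴} Σ_{n<t} Lₙ(x,y)` over `𝒳`
    (xs : Fin d → ℝ) (hxs : xs ∈ 𝒳)
    (hxsmin : ∀ x ∈ 𝒳,
      sSup ((fun y => ∑ n ∈ Finset.Ico 1 t, L n xs y) '' 𝒴)
        ≤ sSup ((fun y => ∑ n ∈ Finset.Ico 1 t, L n x y) '' 𝒴))
    -- `y^‡` maximizes `y ↦ Σ_{n<t} L̄ₙ(x*, y)` over `𝒴`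
    (yddag : Fin I → ℝ) (hyddag : yddag ∈ 𝒴)
    (hyddagmax : ∀ y ∈ 𝒴,
      ∑ n ∈ Finset.Ico 1 t, Lbar n xs y ≤ ∑ n ∈ Finset.Ico 1 t, Lbar n xs yddag) :
    ∑ n ∈ Finset.Ico 1 t,
        (L n xss yss - (lam / (n : ℝ) ^ ((1 : ℝ) / 9)) * ∑ i, Real.log (yddag i + 1))
      ≤ sInf ((fun x => sSup ((fun y => ∑ n ∈ Finset.Ico 1 t, L n x y) '' 𝒴)) '' 𝒳) := by
 -- abbreviations
  set C : ℝ := ∑ n ∈ Finset.Ico 1 t, lam / (n : ℝ) ^ ((1 : ℝ) / 9) with hC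
  have hCnn : 0 ≤ C := Finset.sum_nonneg fun n _ =>
    div_nonneg hlam.le (Real.rpow_nonneg (Nat.cast_nonneg n) _)
  have hgss : 0 ≤ ∑ i, Real.log (yss i + 1) := by
    refine Finset.sum_nonneg fun i _ => Real.log_nonneg ?_
    have h := (h𝒴 ▸ hyss) i
    have h0 : (0 : ℝ) ≤ yss i := h.1
    linarith
  have hSbar : ∀ x y, ∑ n ∈ Finset.Ico 1 t, Lbar n x y
      = (∑ n ∈ Finset.Ico 1 t, L n x y) + C * ∑ i, Real.log (y i + 1) := by
    intro x y
    simp only [hLbar, hC, Finset.sum_add_distrib, Finset.sum_mul]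
  -- step 1: Sbar(xss,yss) ≤ Sbar(xs,yddag)
  have h1 : ∑ n ∈ Finset.Ico 1 t, Lbar n xss yss
      ≤ ∑ n ∈ Finset.Ico 1 t, Lbar n xs yddag := by
    refine (hmm2 xs hxs).trans (csSup_le ⟨_, ⟨yddag, hyddag, rfl⟩⟩ ?_)
    rintro z ⟨y, hy, rfl⟩
    exact hyddagmax y hy
  -- 𝒴 is compact
  have h𝒴cp : IsCompact 𝒴 := by
    have : 𝒴 = Set.univ.pi fun _ : Fin I => Set.Icc (0 : ℝ) ymax := by
      rw [h𝒴]; ext y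
      simp only [Set.mem_setOf_eq, Set.mem_pi, Set.mem_univ, forall_true_left]
    rw [this]
    exact isCompact_univ_pi fun _ => isCompact_Icc
  have hcont : Continuous fun y : Fin I → ℝ => ∑ n ∈ Finset.Ico 1 t, L n xs y := by
    simp only [hL]
    exact continuous_finset_sum _ fun n _ => by
      exact continuous_const.add (continuous_finset_sum _ fun i _ =>
        ((continuous_apply i).mul continuous_const))
  have hbdd : BddAbove ((fun y => ∑ n ∈ Finset.Ico 1 t, L n xs y) '' 𝒴) :=
    (h𝒴cp.image hcont).bddAbove
  -- step 2: S(xs,yddag) ≤ sSup (S(xs,·) '' 𝒴)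
  have h2 : ∑ n ∈ Finset.Ico 1 t, L n xs yddag
      ≤ sSup ((fun y => ∑ n ∈ Finset.Ico 1 t, L n xs y) '' 𝒴) :=
    le_csSup hbdd ⟨yddag, hyddag, rfl⟩
  -- step 3: sSup (S(xs,·) '' 𝒴) ≤ sInf
  have h3 : sSup ((fun y => ∑ n ∈ Finset.Ico 1 t, L n xs y) '' 𝒴)
      ≤ sInf ((fun x => sSup ((fun y => ∑ n ∈ Finset.Ico 1 t, L n x y) '' 𝒴)) '' 𝒳) := by
    refine le_csInf ⟨_, ⟨xss, hxss, rfl⟩⟩ ?_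
    rintro z ⟨x, hx, rfl⟩
    exact hxsmin x hx
  have hLHS : ∑ n ∈ Finset.Ico 1 t,
      (L n xss yss - (lam / (n : ℝ) ^ ((1 : ℝ) / 9)) * ∑ i, Real.log (yddag i + 1))
      = (∑ n ∈ Finset.Ico 1 t, L n xss yss) - C * ∑ i, Real.log (yddag i + 1) := by
    simp only [hC, Finset.sum_sub_distrib, Finset.sum_mul]
  rw [hSbar, hSbar] at h1
  rw [hLHS]
  nlinarith [mul_nonneg hCnn hgss]
end

section
/- Let 𝒴 ⊆ ℝ^I be nonempty, let F, G : 𝒴 → ℝ, and let μ > 0, B ≥ 0. Suppose y* maximizes F over 𝒴 and satisfies the quadratic growth property F(y*) − F(y) ≥ (μ/2)‖y − y*‖₁² for all y ∈ 𝒴, suppose y′ maximizes F + G over 𝒴, and |G(y)| ≤ B for all y ∈ 𝒴. Then ‖y′ − y*‖₁ ≤ 2√(B/μ). -/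
open Finset

/-- stability of maximizers under a bounded perturbation: if `y*`
maximizes `F` over `𝒴` with quadratic growth `F(y*) − F(y) ≥ (μ/2)‖y − y*‖₁²`, `y'`
maximizes `F + G` over `𝒴` and `|G| ≤ B` on `𝒴`, then `‖y' − y*‖₁ ≤ 2√(B/μ)`. -/
theorem stmt_17
    (I : ℕ) (𝒴 : Set (Fin I → ℝ)) (h𝒴ne : 𝒴.Nonempty)
    (F G : (Fin I → ℝ) → ℝ) (μ B : ℝ) (hμ : 0 < μ) (hB : 0 ≤ B)
    (ys : Fin I → ℝ) (hys : ys ∈ 𝒴) (hysmax : ∀ y ∈ 𝒴, F y ≤ F ys)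
    (hQG : ∀ y ∈ 𝒴, (μ / 2) * (∑ i, |y i - ys i|) ^ 2 ≤ F ys - F y)
    (y' : Fin I → ℝ) (hy' : y' ∈ 𝒴)
    (hy'max : ∀ y ∈ 𝒴, F y + G y ≤ F y' + G y')
    (hGbdd : ∀ y ∈ 𝒴, |G y| ≤ B) :
    ∑ i, |y' i - ys i| ≤ 2 * Real.sqrt (B / μ) := by
  set D := ∑ i, |y' i - ys i| with hD
  have hDnn : 0 ≤ D := Finset.sum_nonneg fun i _ => abs_nonneg _
  have h1 : F ys + G ys ≤ F y' + G y' := hy'max ys hys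
  have h2 : (μ / 2) * D ^ 2 ≤ F ys - F y' := hQG y' hy'
  have hG1 := abs_le.mp (hGbdd ys hys)
  have hG2 := abs_le.mp (hGbdd y' hy')
  have h3 : (μ / 2) * D ^ 2 ≤ 2 * B := by nlinarith
  have h4 : D ^ 2 ≤ 4 * (B / μ) := by
    rw [mul_div_assoc', le_div_iff₀ hμ]
    nlinarith
  calc D = Real.sqrt (D ^ 2) := by rw [Real.sqrt_sq hDnn]
    _ ≤ Real.sqrt (4 * (B / μ)) := Real.sqrt_le_sqrt h4
    _ = 2 * Real.sqrt (B / μ) := by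
        rw [Real.sqrt_mul (by norm_num), show (4:ℝ) = 2^2 by norm_num,
          Real.sqrt_sq (by norm_num)]
end

section
/- Let θ be a random vector in ℝ^d whose d coordinates are i.i.d. exponential random variables with rate η = T^{−2/3} (density η e^{−ηs} for s ≥ 0). For each n = 1, …, T let (X_n(θ), Y_n(θ)) be a measurable selection of global minimax points over 𝒳 × 𝒴 of (x, y) ↦ Σ_{m<n} L̄_m(x, y) − θ^⊤x, and assume |L̄_n(x, y)| ≤ B_L for all n ≤ T and (x, y) ∈ 𝒳 × 𝒴. Then there exists a constant C > 0, depending only on d, B_L and x_max = max_{x∈𝒳}‖x‖₁ (but not on t or T), such that for every t ≤ T, Σ_{n<t} E‖X_n(θ) − X_{n+1}(θ)‖₁ ≤ C · t · T^{−1/3}. -/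
/-!
Put `Gₙ(x) = max_{y ∈ 𝒴} Σ_{m<n} L̄ₘ(x, y)`. The minimax property makes `Xₙ(θ)` a minimiser of
`Gₙ(x) − θ ⬝ x` over `𝒳`, and `|Gₙ − Gₙ₊₁| ≤ B_L` on `𝒳`. Raising `θⱼ` by `δ` can only raise the
`j`-th coordinate of such a minimiser, and comparing the minimisers of `Gₙ` and `Gₙ₊₁` under the two
perturbations gives, pointwise in `θ`,
`|Xₙⱼ − Xₙ₊₁ⱼ| ≤ (Xₙⱼ(θ + δeⱼ) − Xₙⱼ(θ)) + (Xₙ₊₁ⱼ(θ + δeⱼ) − Xₙ₊₁ⱼ(θ)) + 2B_L/δ`.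
Shifting an exponential variable by `δ` changes its density by at most the factor `e^{ηδ}`, so each
bracket has expectation at most `2(e^{ηδ} − 1) x_max`. The choice `δ = T^{1/3}`, `η = T^{−2/3}`
makes every term `O(T^{−1/3})`.
-/

open Finset MeasureTheory ProbabilityTheory
open scoped ENNReal

section Perturbation

variable {ι : Type*} [Fintype ι] [DecidableEq ι] {S : Set (ι → ℝ)} {g h : (ι → ℝ) → ℝ}
  {B δ : ℝ}

theorem sub_le_of_isMinOn_add_single (hδ : 0 < δ) (hgh : ∀ z ∈ S, |g z - h z| ≤ B)
    {θ x x' : ι → ℝ} {j : ι} (hxS : x ∈ S) (hx'S : x' ∈ S)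
    (hx : IsMinOn (fun z => g z - θ ⬝ᵥ z) S x)
    (hx' : IsMinOn (fun z => h z - (θ + Pi.single j δ) ⬝ᵥ z) S x') :
    x j - x' j ≤ 2 * B / δ := by
  have h₁ : g x - θ ⬝ᵥ x ≤ g x' - θ ⬝ᵥ x' := hx hx'S
  have h₂ : h x' - (θ + Pi.single j δ) ⬝ᵥ x' ≤ h x - (θ + Pi.single j δ) ⬝ᵥ x := hx' hxS
  simp only [add_dotProduct, single_dotProduct] at h₂
  rw [le_div_iff₀' hδ]
  linarith [(abs_le.1 (hgh x hxS)).1, (abs_le.1 (hgh x' hx'S)).2]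

theorem abs_sub_le_of_isMinOn_add_single (hδ : 0 < δ) (hgh : ∀ z ∈ S, |g z - h z| ≤ B)
    {x y : (ι → ℝ) → ι → ℝ}
    (hx : ∀ θ, x θ ∈ S ∧ IsMinOn (fun z => g z - θ ⬝ᵥ z) S (x θ))
    (hy : ∀ θ, y θ ∈ S ∧ IsMinOn (fun z => h z - θ ⬝ᵥ z) S (y θ)) (θ : ι → ℝ) (j : ι) :
    |x θ j - y θ j| ≤ (x (θ + Pi.single j δ) j - x θ j) + (y (θ + Pi.single j δ) j - y θ j)
      + 2 * B / δ := by
  have hhg : ∀ z ∈ S, |h z - g z| ≤ B := fun z hz => abs_sub_comm (g z) (h z) ▸ hgh z hz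
  have hself : ∀ {f : (ι → ℝ) → ℝ}, ∀ z ∈ S, |f z - f z| ≤ 0 := by simp
  obtain ⟨hxS, hxθ⟩ := hx θ
  obtain ⟨hyS, hyθ⟩ := hy θ
  obtain ⟨hxS', hxθ'⟩ := hx (θ + Pi.single j δ)
  obtain ⟨hyS', hyθ'⟩ := hy (θ + Pi.single j δ)
  have hxx := sub_le_of_isMinOn_add_single hδ hself hxS hxS' hxθ hxθ'
  have hyy := sub_le_of_isMinOn_add_single hδ hself hyS hyS' hyθ hyθ'
  have hxy := sub_le_of_isMinOn_add_single hδ hgh hxS hyS' hxθ hyθ'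
  have hyx := sub_le_of_isMinOn_add_single hδ hhg hyS hxS' hyθ hxθ'
  rw [mul_zero, zero_div] at hxx hyy
  rw [abs_sub_le_iff]
  constructor <;> linarith

end Perturbation

theorem lintegral_comp_add_le_exp_mul_expMeasure (η : ℝ) {δ : ℝ} (hδ : 0 ≤ δ)
    {G : ℝ → ℝ≥0∞} (hG : Measurable G) :
    ∫⁻ s, G (s + δ) ∂expMeasure η
      ≤ ENNReal.ofReal (Real.exp (η * δ)) * ∫⁻ s, G s ∂expMeasure η := by
  have hpdf : Measurable (exponentialPDF η) := (measurable_exponentialPDFReal η).ennreal_ofReal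
  have hshift : ∀ u, exponentialPDF η (u - δ)
      ≤ ENNReal.ofReal (Real.exp (η * δ)) * exponentialPDF η u := by
    intro u
    rcases lt_or_ge u δ with h | h
    · simp [exponentialPDF_of_neg (sub_neg.2 h)]
    · rw [exponentialPDF_of_nonneg (sub_nonneg.2 h), exponentialPDF_of_nonneg (hδ.trans h),
        ← ENNReal.ofReal_mul (Real.exp_nonneg _)]
      refine ENNReal.ofReal_le_ofReal (le_of_eq ?_)
      rw [mul_left_comm, ← Real.exp_add]
      ring_nf
  change ∫⁻ s, G (s + δ) ∂volume.withDensity (exponentialPDF η)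
    ≤ _ * ∫⁻ s, G s ∂volume.withDensity (exponentialPDF η)
  have hGδ : Measurable fun s => G (s + δ) := hG.comp (measurable_add_const δ)
  rw [lintegral_withDensity_eq_lintegral_mul _ hpdf hGδ,
    lintegral_withDensity_eq_lintegral_mul _ hpdf hG, ← lintegral_const_mul _ (hpdf.mul hG)]
  calc ∫⁻ s, exponentialPDF η s * G (s + δ)
      = ∫⁻ u, exponentialPDF η (u - δ) * G u := by
        simpa using (lintegral_add_right_eq_self (fun u => exponentialPDF η (u - δ) * G u) δ)
    _ ≤ ∫⁻ u, ENNReal.ofReal (Real.exp (η * δ)) * (exponentialPDF η u * G u) := by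
        refine lintegral_mono fun u => ?_
        rw [← mul_assoc]
        exact mul_le_mul_of_nonneg_right (hshift u) zero_le

section ProductExponential

variable {ι : Type*} [Fintype ι] {η δ : ℝ}

local notation "π" => Measure.pi fun _ : ι => expMeasure η

theorem lintegral_comp_add_single_le_pi_expMeasure [DecidableEq ι] (hη : 0 < η) (hδ : 0 ≤ δ)
    (j : ι) {F : (ι → ℝ) → ℝ≥0∞} (hF : Measurable F) :
    ∫⁻ θ, F (θ + Pi.single j δ) ∂π ≤ ENNReal.ofReal (Real.exp (η * δ)) * ∫⁻ θ, F θ ∂π := by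
  have := isProbabilityMeasure_expMeasure hη
  rw [← lintegral_const_mul _ hF]
  refine lintegral_le_of_lmarginal_le {j} (hF.comp (measurable_add_const _))
    (measurable_const.mul hF) fun θ => ?_
  have hupdate : ∀ s, Function.update θ j s + Pi.single j δ = Function.update θ j (s + δ) := by
    intro s
    ext k
    rcases eq_or_ne k j with rfl | hk <;> simp [*]
  simp only [lmarginal_singleton, hupdate]
  have hFθ : Measurable fun s => F (Function.update θ j s) := hF.comp (measurable_update θ)
  rw [lintegral_const_mul _ hFθ]
  exact lintegral_comp_add_le_exp_mul_expMeasure η hδ hFθ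

theorem integral_comp_add_single_le_pi_expMeasure [DecidableEq ι] (hη : 0 < η) (hδ : 0 ≤ δ)
    (j : ι) {F : (ι → ℝ) → ℝ} (hFm : Measurable F) (hFi : Integrable F π) (hF : ∀ θ, 0 ≤ F θ) :
    ∫ θ, F (θ + Pi.single j δ) ∂π ≤ Real.exp (η * δ) * ∫ θ, F θ ∂π := by
  have hFs : Measurable fun θ : ι → ℝ => F (θ + Pi.single j δ) := by fun_prop
  rw [integral_eq_lintegral_of_nonneg_ae (f := fun θ => F (θ + (Pi.single j δ : ι → ℝ)))
      (ae_of_all _ fun θ => hF _) hFs.aestronglyMeasurable,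
    integral_eq_lintegral_of_nonneg_ae (ae_of_all _ hF) hFm.aestronglyMeasurable,
    ← ENNReal.toReal_ofReal (Real.exp_nonneg (η * δ)), ← ENNReal.toReal_mul]
  exact ENNReal.toReal_mono (ENNReal.mul_ne_top ENNReal.ofReal_ne_top hFi.lintegral_lt_top.ne)
    (lintegral_comp_add_single_le_pi_expMeasure hη hδ j hFm.ennreal_ofReal)

theorem integral_comp_add_single_le_add_pi_expMeasure [DecidableEq ι] (hη : 0 < η)
    (hδ : 0 ≤ δ) (j : ι) {F : (ι → ℝ) → ℝ} {M : ℝ} (hFm : Measurable F) (hFM : ∀ θ, |F θ| ≤ M) :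
    ∫ θ, F (θ + Pi.single j δ) ∂π ≤ ∫ θ, F θ ∂π + 2 * (Real.exp (η * δ) - 1) * M := by
  have := isProbabilityMeasure_expMeasure hη
  have hFi : Integrable F π :=
    .of_bound hFm.aestronglyMeasurable M (ae_of_all _ fun θ => hFM θ)
  have hFsi : Integrable (fun θ : ι → ℝ => F (θ + Pi.single j δ)) π :=
    .of_bound (hFm.comp (measurable_add_const _)).aestronglyMeasurable M
      (ae_of_all _ fun θ => hFM _)
  have hshift := integral_comp_add_single_le_pi_expMeasure hη hδ j (hFm.add_const M)
    (hFi.add (integrable_const M)) fun θ => neg_le_iff_add_nonneg.1 (abs_le.1 (hFM θ)).1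
  simp only [integral_add hFsi (integrable_const M), integral_add hFi (integrable_const M),
    integral_const, probReal_univ, one_smul] at hshift
  have hmean : ∫ θ, F θ ∂π + M ≤ 2 * M := by
    have := integral_mono hFi (integrable_const M) fun θ => (abs_le.1 (hFM θ)).2
    simp only [integral_const, probReal_univ, one_smul] at this
    linarith
  have hexp : 0 ≤ Real.exp (η * δ) - 1 := by
    linarith [Real.add_one_le_exp (η * δ), mul_nonneg hη.le hδ]
  nlinarith [mul_le_mul_of_nonneg_left hmean hexp]

theorem integral_sum_abs_sub_le_of_isMinOn {B M : ℝ}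
    (hη : 0 < η) (hδ : 0 < δ) {S : Set (ι → ℝ)} (hS : ∀ z ∈ S, ∀ j, |z j| ≤ M)
    {g h : (ι → ℝ) → ℝ} (hgh : ∀ z ∈ S, |g z - h z| ≤ B) {x y : (ι → ℝ) → ι → ℝ}
    (hxm : Measurable x) (hym : Measurable y)
    (hx : ∀ θ, x θ ∈ S ∧ IsMinOn (fun z => g z - θ ⬝ᵥ z) S (x θ))
    (hy : ∀ θ, y θ ∈ S ∧ IsMinOn (fun z => h z - θ ⬝ᵥ z) S (y θ)) :
    ∫ θ, ∑ j, |x θ j - y θ j| ∂π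
      ≤ Fintype.card ι * (4 * (Real.exp (η * δ) - 1) * M + 2 * B / δ) := by
  classical
  have := isProbabilityMeasure_expMeasure hη
  have hint : ∀ {F : (ι → ℝ) → ℝ} {K : ℝ}, Measurable F → (∀ θ, |F θ| ≤ K) → Integrable F π :=
    fun hF hK => .of_bound hF.aestronglyMeasurable _ (ae_of_all _ hK)
  have hxj : ∀ j, Measurable fun θ => x θ j := fun j => (measurable_pi_apply j).comp hxm
  have hyj : ∀ j, Measurable fun θ => y θ j := fun j => (measurable_pi_apply j).comp hym
  have hxM : ∀ θ j, |x θ j| ≤ M := fun θ => hS _ (hx θ).1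
  have hyM : ∀ θ j, |y θ j| ≤ M := fun θ => hS _ (hy θ).1
  have hxi : ∀ j, Integrable (fun θ => x θ j) π := fun j => hint (hxj j) (hxM · j)
  have hyi : ∀ j, Integrable (fun θ => y θ j) π := fun j => hint (hyj j) (hyM · j)
  have habs : ∀ j, Integrable (fun θ => |x θ j - y θ j|) π := fun j => ((hxi j).sub (hyi j)).abs
  have hcoord : ∀ j, ∫ θ, |x θ j - y θ j| ∂π ≤ 4 * (Real.exp (η * δ) - 1) * M + 2 * B / δ := by
    intro j
    have hxsi : Integrable (fun θ => x (θ + Pi.single j δ) j) π :=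
      hint ((hxj j).comp (measurable_add_const _)) fun θ => hxM _ j
    have hysi : Integrable (fun θ => y (θ + Pi.single j δ) j) π :=
      hint ((hyj j).comp (measurable_add_const _)) fun θ => hyM _ j
    have hxd : Integrable (fun θ => x (θ + Pi.single j δ) j - x θ j) π := hxsi.sub (hxi j)
    have hyd : Integrable (fun θ => y (θ + Pi.single j δ) j - y θ j) π := hysi.sub (hyi j)
    have hd : Integrable (fun θ => (x (θ + Pi.single j δ) j - x θ j)
        + (y (θ + Pi.single j δ) j - y θ j)) π := hxd.add hyd
    have hmono : ∫ θ, |x θ j - y θ j| ∂π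
        ≤ ∫ θ, ((x (θ + Pi.single j δ) j - x θ j) + (y (θ + Pi.single j δ) j - y θ j)
          + 2 * B / δ) ∂π :=
      integral_mono (habs j) (hd.add (integrable_const _))
        (abs_sub_le_of_isMinOn_add_single hδ hgh hx hy · j)
    rw [integral_add hd (integrable_const _), integral_add hxd hyd, integral_sub hxsi (hxi j),
      integral_sub hysi (hyi j), integral_const, probReal_univ, one_smul] at hmono
    linarith [integral_comp_add_single_le_add_pi_expMeasure hη hδ.le j (hxj j) (hxM · j),
      integral_comp_add_single_le_add_pi_expMeasure hη hδ.le j (hyj j) (hyM · j)]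
  rw [integral_finsetSum _ fun j _ => habs j]
  calc ∑ j, ∫ θ, |x θ j - y θ j| ∂π
      ≤ ∑ _j : ι, (4 * (Real.exp (η * δ) - 1) * M + 2 * B / δ) := sum_le_sum fun j _ => hcoord j
    _ = _ := by rw [sum_const, card_univ, nsmul_eq_mul]

end ProductExponential

theorem abs_apply_le_of_mem_upperBounds {ι : Type*} [Fintype ι] {S : Set (ι → ℝ)} {M : ℝ}
    (hM : M ∈ upperBounds ((fun x => ∑ j, |x j|) '' S)) {z : ι → ℝ} (hz : z ∈ S) (j : ι) :
    |z j| ≤ M :=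
  (single_le_sum (fun k _ => abs_nonneg (z k)) (mem_univ j)).trans (hM ⟨z, hz, rfl⟩)

theorem exp_sub_one_le_two_mul {τ : ℝ} (h₀ : 0 ≤ τ) (h₁ : τ ≤ 1) : Real.exp τ - 1 ≤ 2 * τ := by
  have := Real.abs_exp_sub_one_le (abs_le.2 ⟨by linarith, h₁⟩)
  rw [abs_of_nonneg h₀] at this
  exact (le_abs_self _).trans this

theorem four_mul_exp_sub_one_mul_add_div_rpow_le {T M B : ℝ} (hT : 1 ≤ T) (hM : 0 ≤ M) :
    4 * (Real.exp (T ^ (-(2 : ℝ) / 3) * T ^ ((1 : ℝ) / 3)) - 1) * M + 2 * B / T ^ ((1 : ℝ) / 3)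
      ≤ (8 * M + 2 * B) * T ^ (-(1 : ℝ) / 3) := by
  have hT₀ : 0 < T := zero_lt_one.trans_le hT
  have hprod : T ^ (-(2 : ℝ) / 3) * T ^ ((1 : ℝ) / 3) = T ^ (-(1 : ℝ) / 3) := by
    rw [← Real.rpow_add hT₀]; norm_num
  have hinv : 2 * B / T ^ ((1 : ℝ) / 3) = 2 * B * T ^ (-(1 : ℝ) / 3) := by
    rw [div_eq_mul_inv, ← Real.rpow_neg hT₀.le]; norm_num
  have hτ₀ : 0 ≤ T ^ (-(1 : ℝ) / 3) := Real.rpow_nonneg hT₀.le _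
  have hτ₁ : T ^ (-(1 : ℝ) / 3) ≤ 1 := Real.rpow_le_one_of_one_le_of_nonpos hT (by norm_num)
  rw [hprod, hinv]
  nlinarith [mul_le_mul_of_nonneg_right (exp_sub_one_le_two_mul hτ₀ hτ₁) hM]

theorem csSup_image_sub_const {β : Type*} {f : β → ℝ} {Y : Set β} (hY : Y.Nonempty)
    (hf : BddAbove (f '' Y)) (c : ℝ) : sSup ((fun y => f y - c) '' Y) = sSup (f '' Y) - c := by
  rw [← Set.image_image (· - c) f]
  exact ((OrderIso.subRight c).map_csSup' (hY.image f) hf).symm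

theorem abs_csSup_image_sub_csSup_image_le {β : Type*} {f g : β → ℝ} {Y : Set β} {B : ℝ}
    (hY : Y.Nonempty) (hf : BddAbove (f '' Y)) (hg : BddAbove (g '' Y))
    (hfg : ∀ y ∈ Y, |f y - g y| ≤ B) : |sSup (f '' Y) - sSup (g '' Y)| ≤ B := by
  have key : ∀ {f g : β → ℝ}, BddAbove (g '' Y) → (∀ y ∈ Y, f y ≤ g y + B) →
      sSup (f '' Y) ≤ sSup (g '' Y) + B := fun hg hfg =>
    csSup_le (hY.image _) <| by
      rintro _ ⟨y, hy, rfl⟩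
      linarith [hfg y hy, le_csSup hg ⟨y, hy, rfl⟩]
  have h₁ := key (f := f) (g := g) hg fun y hy => by linarith [abs_le.1 (hfg y hy)]
  have h₂ := key (f := g) (g := f) hf fun y hy => by linarith [abs_le.1 (hfg y hy)]
  exact abs_sub_le_iff.2 ⟨by linarith, by linarith⟩

theorem bddAbove_image_sum_of_le {β : Type*} {ℓ : ℕ → β → ℝ} {Y : Set β} {s : Finset ℕ} {B : ℝ}
    (h : ∀ m ∈ s, ∀ y ∈ Y, ℓ m y ≤ B) : BddAbove ((fun y => ∑ m ∈ s, ℓ m y) '' Y) :=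
  ⟨∑ _m ∈ s, B, by
    rintro _ ⟨y, hy, rfl⟩
    exact sum_le_sum fun m hm => h m hm y hy⟩

noncomputable def cumulativeMax {α β : Type*} (ℓ : ℕ → α → β → ℝ) (Y : Set β) (n : ℕ) (x : α) :
    ℝ :=
  sSup ((fun y => ∑ m ∈ Ico 1 n, ℓ m x y) '' Y)

section CumulativeMax

variable {α β : Type*} {ℓ : ℕ → α → β → ℝ} {S : Set α} {Y : Set β} {n : ℕ} {B : ℝ}

theorem bddAbove_image_sum_Ico (hℓ : ∀ m, 1 ≤ m → m ≤ n → ∀ x ∈ S, ∀ y ∈ Y, |ℓ m x y| ≤ B)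
    {k : ℕ} (hk : k ≤ n + 1) {x : α} (hx : x ∈ S) :
    BddAbove ((fun y => ∑ m ∈ Ico 1 k, ℓ m x y) '' Y) :=
  bddAbove_image_sum_of_le fun m hm y hy =>
    (abs_le.1 (hℓ m (mem_Ico.1 hm).1 (by grind) x hx y hy)).2

theorem abs_cumulativeMax_sub_succ_le (hY : Y.Nonempty)
    (hℓ : ∀ m, 1 ≤ m → m ≤ n → ∀ x ∈ S, ∀ y ∈ Y, |ℓ m x y| ≤ B) (hn : 1 ≤ n) {x : α}
    (hx : x ∈ S) : |cumulativeMax ℓ Y n x - cumulativeMax ℓ Y (n + 1) x| ≤ B :=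
  abs_csSup_image_sub_csSup_image_le hY (bddAbove_image_sum_Ico hℓ n.le_succ hx)
    (bddAbove_image_sum_Ico hℓ le_rfl hx) fun y hy => by
      rw [sum_Ico_succ_top hn, sub_add_cancel_left, abs_neg]
      exact hℓ n hn le_rfl x hx y hy

theorem isMinOn_cumulativeMax_sub (hY : Y.Nonempty)
    (hℓ : ∀ m, 1 ≤ m → m ≤ n → ∀ x ∈ S, ∀ y ∈ Y, |ℓ m x y| ≤ B) {φ : α → ℝ} {x₀ : α} {y₀ : β}
    (hmax : ∀ y ∈ Y, (∑ m ∈ Ico 1 n, ℓ m x₀ y) - φ x₀ ≤ (∑ m ∈ Ico 1 n, ℓ m x₀ y₀) - φ x₀)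
    (hmin : ∀ x ∈ S, (∑ m ∈ Ico 1 n, ℓ m x₀ y₀) - φ x₀
      ≤ sSup ((fun y => (∑ m ∈ Ico 1 n, ℓ m x y) - φ x) '' Y)) :
    IsMinOn (fun x => cumulativeMax ℓ Y n x - φ x) S x₀ := by
  intro x hx
  have hx₀ : cumulativeMax ℓ Y n x₀ ≤ ∑ m ∈ Ico 1 n, ℓ m x₀ y₀ :=
    csSup_le (hY.image _) fun _ ⟨y, hy, hyz⟩ => hyz ▸ by linarith [hmax y hy]
  have hx' := hmin x hx
  rw [csSup_image_sub_const hY (bddAbove_image_sum_Ico hℓ n.le_succ hx)] at hx'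
  exact (sub_le_sub_right hx₀ _).trans hx'

end CumulativeMax

/-- Lemma 6, stability of the primal FTPL iterates: with i.i.d.
exponential (rate `η = T^{−2/3}`) perturbation coordinates and measurable selections of
global minimax points of the perturbed offline oracles, there is a constant `C > 0`
depending only on `d`, `B_L` and `x_max = max_{x∈𝒳}‖x‖₁` (not on `t` or `T`) with
`Σ_{n<t} E‖Xₙ(θ) − X_{n+1}(θ)‖₁ ≤ C · t · T^{−1/3}` for every `t ≤ T`. -/
theorem stmt_18
    (d : ℕ) (hd : 0 < d) (BL xmax : ℝ) (hBL : 0 < BL) :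
    ∃ C > 0, ∀ (I T : ℕ), 0 < I → 0 < T →
      ∀ 𝒳 : Set (Fin d → ℝ), 𝒳.Nonempty → IsCompact 𝒳 →
      IsGreatest ((fun x => ∑ j, |x j|) '' 𝒳) xmax →
      ∀ ymax : ℝ, 0 < ymax →
      ∀ 𝒴 : Set (Fin I → ℝ), 𝒴 = {y | ∀ i, y i ∈ Set.Icc (0 : ℝ) ymax} →
      ∀ G0 : ℝ, 0 < G0 →
      ∀ (f : ℕ → (Fin d → ℝ) → ℝ) (c : Fin I → ℕ → (Fin d → ℝ) → ℝ) (b : Fin I → ℝ),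
      (∀ i, 0 ≤ b i) →
      (∀ n, 1 ≤ n → n ≤ T → ∀ x x' : Fin d → ℝ,
        |f n x - f n x'| ≤ G0 * ∑ j, |x j - x' j|) →
      (∀ i n, 1 ≤ n → n ≤ T → ∀ x x' : Fin d → ℝ,
        |c i n x - c i n x'| ≤ G0 * ∑ j, |x j - x' j|) →
      ∀ lam : ℝ, 0 < lam →
      ∀ (L Lbar : ℕ → (Fin d → ℝ) → (Fin I → ℝ) → ℝ),
      (∀ n x y, L n x y = f n x + ∑ i, y i * (c i n x - b i)) →
      (∀ n x y, Lbar n x y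
        = L n x y + (lam / (n : ℝ) ^ ((1 : ℝ) / 9)) * ∑ i, Real.log (y i + 1)) →
      (∀ n, 1 ≤ n → n ≤ T → ∀ x ∈ 𝒳, ∀ y ∈ 𝒴, |Lbar n x y| ≤ BL) →
      ∀ (Ω : Type) (_ : MeasureSpace Ω) (_ : IsProbabilityMeasure (ℙ : Measure Ω))
        (θ : Ω → Fin d → ℝ), Measurable θ →
      -- the `d` coordinates of `θ` are i.i.d. exponential with rate `η = T^{−2/3}`
      iIndepFun (m := fun _ : Fin d => Real.measurableSpace) (fun k ω => θ ω k) ℙ →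
      (∀ k : Fin d, Measure.map (fun ω => θ ω k) ℙ
        = expMeasure ((T : ℝ) ^ (-(2 : ℝ) / 3))) →
      ∀ (X : ℕ → (Fin d → ℝ) → Fin d → ℝ) (Y : ℕ → (Fin d → ℝ) → Fin I → ℝ),
      (∀ n, Measurable (X n)) → (∀ n, Measurable (Y n)) →
      -- `(Xₙ(θ), Yₙ(θ))` is a global minimax point of `(x,y) ↦ Σ_{m<n} L̄ₘ(x,y) − θᵀx`
      (∀ n, 1 ≤ n → n ≤ T → ∀ θv : Fin d → ℝ,
        X n θv ∈ 𝒳 ∧ Y n θv ∈ 𝒴 ∧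
        (∀ y ∈ 𝒴,
          (∑ m ∈ Finset.Ico 1 n, Lbar m (X n θv) y) - ∑ j, θv j * X n θv j
            ≤ (∑ m ∈ Finset.Ico 1 n, Lbar m (X n θv) (Y n θv)) - ∑ j, θv j * X n θv j) ∧
        (∀ x ∈ 𝒳,
          (∑ m ∈ Finset.Ico 1 n, Lbar m (X n θv) (Y n θv)) - ∑ j, θv j * X n θv j
            ≤ sSup ((fun y' => (∑ m ∈ Finset.Ico 1 n, Lbar m x y') - ∑ j, θv j * x j) '' 𝒴))) →
      ∀ t, t ≤ T →
        ∑ n ∈ Finset.Ico 1 t, ∫ ω, ∑ j, |X n (θ ω) j - X (n + 1) (θ ω) j| ∂ℙ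
          ≤ C * t * (T : ℝ) ^ (-(1 : ℝ) / 3) := by
  refine ⟨d * (8 * |xmax| + 2 * BL), by positivity, ?_⟩
  intro I T _ hT 𝒳 _ _ hxmax ymax hymax 𝒴 h𝒴 _ _ f c b _ _ _ lam _ L Lbar _ _ hLbar Ω _ _ θ hθ
    hindep hlaw X Y hX _ hXY t ht
  have hY : 𝒴.Nonempty := ⟨0, h𝒴 ▸ fun _ => ⟨le_rfl, hymax.le⟩⟩
  have hℓ : ∀ n ≤ T, ∀ m, 1 ≤ m → m ≤ n → ∀ x ∈ 𝒳, ∀ y ∈ 𝒴, |Lbar m x y| ≤ BL :=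
    fun n hn m h₁ h₂ => hLbar m h₁ (h₂.trans hn)
  have hXmin : ∀ n, 1 ≤ n → n ≤ T → ∀ θv, X n θv ∈ 𝒳 ∧
      IsMinOn (fun x => cumulativeMax Lbar 𝒴 n x - θv ⬝ᵥ x) 𝒳 (X n θv) := fun n h₁ h₂ θv =>
    let ⟨hXn, _, hmax, hmin⟩ := hXY n h₁ h₂ θv
    ⟨hXn, isMinOn_cumulativeMax_sub (φ := (θv ⬝ᵥ ·)) hY (hℓ n h₂) hmax hmin⟩
  have hlaw' : Measure.map θ ℙ = Measure.pi fun _ => expMeasure ((T : ℝ) ^ (-(2 : ℝ) / 3)) := by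
    simpa only [hlaw] using
      hindep.map_fun_eq_pi_map fun k => (hθ.eval (a := k)).aemeasurable
  have hstep : ∀ n ∈ Ico 1 t, ∫ ω, ∑ j, |X n (θ ω) j - X (n + 1) (θ ω) j| ∂ℙ
      ≤ d * (8 * |xmax| + 2 * BL) * (T : ℝ) ^ (-(1 : ℝ) / 3) := by
    intro n hn
    obtain ⟨h₁, h₂⟩ := mem_Ico.1 hn
    have hXm := hX n
    have hXm' := hX (n + 1)
    rw [← integral_map (φ := θ) (f := fun v => ∑ j, |X n v j - X (n + 1) v j|) hθ.aemeasurable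
      (by fun_prop), hlaw']
    refine (integral_sum_abs_sub_le_of_isMinOn (δ := (T : ℝ) ^ ((1 : ℝ) / 3)) (by positivity)
      (by positivity) (fun z hz j => (abs_apply_le_of_mem_upperBounds hxmax.2 hz j).trans
        (le_abs_self xmax))
      (fun x hx => abs_cumulativeMax_sub_succ_le hY (hℓ n (by omega)) h₁ hx) hXm hXm'
      (hXmin n h₁ (by omega)) (hXmin (n + 1) (by omega) (by omega))).trans ?_
    simpa only [Fintype.card_fin, mul_assoc] using mul_le_mul_of_nonneg_left
      (four_mul_exp_sub_one_mul_add_div_rpow_le (Nat.one_le_cast.2 hT) (abs_nonneg _)) d.cast_nonneg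
  calc _ ≤ #(Ico 1 t) • (d * (8 * |xmax| + 2 * BL) * (T : ℝ) ^ (-(1 : ℝ) / 3)) :=
        sum_le_card_nsmul _ _ _ hstep
    _ ≤ d * (8 * |xmax| + 2 * BL) * t * (T : ℝ) ^ (-(1 : ℝ) / 3) := by
        rw [Nat.card_Ico, nsmul_eq_mul, mul_comm, mul_right_comm]
        gcongr
        exact_mod_cast Nat.sub_le t 1
end

section
/- Let θ be a random vector in ℝ^d whose d coordinates are i.i.d. exponential random variables with rate η = T^{−2/3}. For each n = 1, …, T let (X_n(θ), Y_n(θ)) be a measurable selection of global minimax points over 𝒳 × 𝒴 of (x, y) ↦ Σ_{m<n} L̄_m(x, y) − θ^⊤x, and let Y_n″(θ) be a measurable selection of maximizers of y ↦ Σ_{m<n} L̄_m(X_{n+1}(θ), y) over 𝒴. Let G > 0 be such that every L̄_n(·, y) is G-Lipschitz in x on ℝ^d (uniformly over y ∈ 𝒴) and every L̄_n(x, ·) is G-Lipschitz in y on 𝒴 (uniformly over x ∈ 𝒳), both with respect to the ℓ¹-norm. Then for every t ≤ T, E[ Σ_{n<t} L̄_n(X_n, Y_n) ] − min_{x∈𝒳}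 max_{y∈𝒴} Σ_{n<t} L̄_n(x, y) ≤ G Σ_{n<t} ( E‖X_n − X_{n+1}‖₁ + E‖Y_n − Y_{n+1}‖₁ + E‖Y_n″ − Y_{n+1}‖₁ ) + 2 T^{2/3} (log d + 1) x_max, where x_max = max_{x∈𝒳}‖x‖₁. -/
open Finset MeasureTheory ProbabilityTheory

/-
The leaders `(Xₙ, Yₙ)` are global minimax points of the perturbed cumulative loss. A be-the-leader
induction shows that the one-step-late plays `(X_{n+1}, Yₙ″)` lose in total at most the final
leader's perturbed value plus `θ·X₁`, and by its minimax property that value is at most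
`max_y Σ L̄(x, y) - θ·x` for any `x ∈ 𝒳`. Going back from `(X_{n+1}, Yₙ″)` to `(Xₙ, Yₙ)` costs
the `G`-Lipschitz stability terms. The perturbation `θ·(X₁ - x)` is paid at rate
`a = log d / η` per unit of `ℓ¹` distance (at most `2 x_max`), plus the excesses `(|θⱼ| - a)⁺`,
each of expectation `e^{-η a} / η = 1 / (d η)` under the exponential law. Taking expectations
and then the infimum over `x` gives the bound, as `1 / η = T^{2/3}`.
-/

section ExponentialTail
open Real Set Filter

variable {r : ℝ}

theorem hasDerivAt_exp_tail_antideriv (a x : ℝ) (hr : r ≠ 0) :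
    HasDerivAt (fun x => -((x - a + r⁻¹) * exp (-(r * x))))
      (r * exp (-(r * x)) * (x - a)) x := by
  have h := ((((hasDerivAt_id' x).sub_const a).add_const r⁻¹).fun_mul
    ((hasDerivAt_id' x).const_mul r).fun_neg.exp).fun_neg
  refine h.congr_deriv ?_
  field_simp
  ring

theorem tendsto_exp_tail_antideriv (a : ℝ) (hr : 0 < r) :
    Tendsto (fun x => -((x - a + r⁻¹) * exp (-(r * x)))) atTop (nhds 0) := by
  have hlin : Tendsto (fun x => r * x) atTop atTop := tendsto_id.const_mul_atTop hr
  have h0 := tendsto_exp_neg_atTop_nhds_zero.comp hlin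
  have h1 := ((tendsto_pow_mul_exp_neg_atTop_nhds_zero 1).comp hlin).const_mul r⁻¹
  have hsum := (h1.add (h0.const_mul (r⁻¹ - a))).neg
  simp only [mul_zero, add_zero, neg_zero] at hsum
  refine hsum.congr fun x => ?_
  simp only [Function.comp, pow_one]
  field_simp
  ring

theorem integral_Ioi_mul_exp_neg_mul_sub (a : ℝ) (hr : 0 < r) :
    IntegrableOn (fun x => r * exp (-(r * x)) * (x - a)) (Ioi a) ∧
      ∫ x in Ioi a, r * exp (-(r * x)) * (x - a) = exp (-(r * a)) / r := by
  have hderiv : ∀ x ∈ Ici a, HasDerivAt (fun x => -((x - a + r⁻¹) * exp (-(r * x))))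
      (r * exp (-(r * x)) * (x - a)) x := fun x _ => hasDerivAt_exp_tail_antideriv a x hr.ne'
  have hpos : ∀ x ∈ Ioi a, 0 ≤ r * exp (-(r * x)) * (x - a) := fun x hx => by
    have : 0 ≤ x - a := sub_nonneg.2 (le_of_lt hx)
    positivity
  refine ⟨integrableOn_Ioi_deriv_of_nonneg' hderiv hpos (tendsto_exp_tail_antideriv a hr), ?_⟩
  rw [integral_Ioi_of_hasDerivAt_of_nonneg' hderiv hpos (tendsto_exp_tail_antideriv a hr)]
  field_simp
  ring

theorem exponentialPDF_toReal_smul_posPart_abs_sub (a : ℝ) (ha : 0 ≤ a) (hr : 0 < r) :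
    (fun x => (exponentialPDF r x).toReal • max (|x| - a) 0)
      = (Ioi a).indicator (fun x => r * exp (-(r * x)) * (x - a)) := by
  ext x
  rcases le_or_gt x a with hxa | hxa
  · rw [indicator_of_notMem (by simpa using hxa)]
    rcases lt_or_ge x 0 with hx | hx
    · simp [exponentialPDF_of_neg hx]
    · simp [abs_of_nonneg hx, hxa]
  · have hx : 0 ≤ x := ha.trans hxa.le
    rw [indicator_of_mem (by simpa using hxa), exponentialPDF_of_nonneg hx,
      ENNReal.toReal_ofReal (by positivity), abs_of_nonneg hx, max_eq_left (by linarith),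
      smul_eq_mul]

theorem expMeasure_eq_withDensity :
    expMeasure r = volume.withDensity (exponentialPDF r) := rfl

theorem measurable_exponentialPDF : Measurable (exponentialPDF r) :=
  (measurable_exponentialPDFReal r).ennreal_ofReal

theorem integrable_posPart_abs_sub_expMeasure (a : ℝ) (ha : 0 ≤ a) (hr : 0 < r) :
    Integrable (fun x => max (|x| - a) 0) (expMeasure r) := by
  rw [expMeasure_eq_withDensity, integrable_withDensity_iff_integrable_smul'
    measurable_exponentialPDF (ae_of_all _ fun _ => ENNReal.ofReal_lt_top),
    exponentialPDF_toReal_smul_posPart_abs_sub a ha hr]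
  exact (integral_Ioi_mul_exp_neg_mul_sub a hr).1.integrable_indicator measurableSet_Ioi

theorem integral_posPart_abs_sub_expMeasure (a : ℝ) (ha : 0 ≤ a) (hr : 0 < r) :
    ∫ x, max (|x| - a) 0 ∂expMeasure r = exp (-(r * a)) / r := by
  rw [expMeasure_eq_withDensity, integral_withDensity_eq_integral_toReal_smul
    measurable_exponentialPDF (ae_of_all _ fun _ => ENNReal.ofReal_lt_top),
    exponentialPDF_toReal_smul_posPart_abs_sub a ha hr, integral_indicator measurableSet_Ioi]
  exact (integral_Ioi_mul_exp_neg_mul_sub a hr).2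

end ExponentialTail

section Leader

variable {α β : Type*}

def IsGlobalMinimaxOn (h : α → β → ℝ) (s : Set α) (u : Set β) (x : α) (y : β) : Prop :=
  x ∈ s ∧ y ∈ u ∧ IsMaxOn (h x) u y ∧ ∀ x' ∈ s, h x y ≤ sSup (h x' '' u)

theorem add_sum_Ico_le_of_add_le_succ {M : Type*} [AddCommMonoid M] [PartialOrder M]
    [IsOrderedAddMonoid M] (a g : ℕ → M) {m t : ℕ} (hmt : m ≤ t)
    (h : ∀ n, m ≤ n → n < t → a n + g n ≤ a (n + 1)) :
    a m + ∑ n ∈ Ico m t, g n ≤ a t := by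
  induction t, hmt using Nat.le_induction with
  | base => simp
  | succ k hmk ih =>
    rw [sum_Ico_succ_top hmk, ← add_assoc]
    exact (add_le_add (ih fun n h1 h2 => h n h1 (h2.trans k.lt_succ_self)) le_rfl).trans
      (h k hmk k.lt_succ_self)

theorem csSup_image_sub_const_le {u : Set β} (hu : u.Nonempty) {g : β → ℝ}
    (hg : BddAbove (g '' u)) (c : ℝ) :
    sSup ((fun y => g y - c) '' u) ≤ sSup (g '' u) - c :=
  csSup_le (hu.image _) <| Set.forall_mem_image.2 fun _ hy =>
    sub_le_sub_right (le_csSup hg (Set.mem_image_of_mem g hy)) c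

/-- Be-the-leader: each step `n → n + 1` the leader's perturbed value grows by at least
`ℓ n (X (n + 1)) (Y' n)`. -/
theorem sum_Ico_sub_le_of_isGlobalMinimaxOn {s : Set α} {u : Set β} (ℓ : ℕ → α → β → ℝ)
    (q : α → ℝ) (X : ℕ → α) (Y Y' : ℕ → β) {t : ℕ} (ht : 1 ≤ t)
    (hXY : ∀ n, 1 ≤ n → n ≤ t →
      IsGlobalMinimaxOn (fun x y => (∑ m ∈ Ico 1 n, ℓ m x y) - q x) s u (X n) (Y n))
    (hY' : ∀ n, 1 ≤ n → n < t →
      Y' n ∈ u ∧ IsMaxOn (fun y => ∑ m ∈ Ico 1 n, ℓ m (X (n + 1)) y) u (Y' n)) :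
    (∑ n ∈ Ico 1 t, ℓ n (X (n + 1)) (Y' n)) - q (X 1)
      ≤ (∑ m ∈ Ico 1 t, ℓ m (X t) (Y t)) - q (X t) := by
  have h := add_sum_Ico_le_of_add_le_succ
    (fun n => (∑ m ∈ Ico 1 n, ℓ m (X n) (Y n)) - q (X n)) (fun n => ℓ n (X (n + 1)) (Y' n)) ht
    fun n h1 h2 => by
      obtain ⟨-, -, -, hmin⟩ := hXY n h1 h2.le
      obtain ⟨hXs, -, hmax, -⟩ := hXY (n + 1) (by omega) h2
      obtain ⟨hY'u, hY'max⟩ := hY' n h1 h2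
      have hsup : sSup ((fun y => (∑ m ∈ Ico 1 n, ℓ m (X (n + 1)) y) - q (X (n + 1))) '' u)
          ≤ (∑ m ∈ Ico 1 n, ℓ m (X (n + 1)) (Y' n)) - q (X (n + 1)) :=
        csSup_le ⟨_, Set.mem_image_of_mem _ hY'u⟩ <| Set.forall_mem_image.2 fun y hy =>
          sub_le_sub_right (hY'max hy) _
      have hcur : (∑ m ∈ Ico 1 n, ℓ m (X n) (Y n)) - q (X n)
          ≤ sSup ((fun y => (∑ m ∈ Ico 1 n, ℓ m (X (n + 1)) y) - q (X (n + 1))) '' u) :=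
        hmin _ hXs
      have hnext : (∑ m ∈ Ico 1 (n + 1), ℓ m (X (n + 1)) (Y' n)) - q (X (n + 1))
          ≤ (∑ m ∈ Ico 1 (n + 1), ℓ m (X (n + 1)) (Y (n + 1))) - q (X (n + 1)) :=
        hmax hY'u
      rw [sum_Ico_succ_top h1] at hnext
      linarith
  simpa [add_comm, ← sub_eq_add_neg] using h

end Leader

section Regret

variable {ι κ : Type*} [Fintype ι] [Fintype κ]

theorem sum_abs_sub_le_two_mul {s : Set (ι → ℝ)} {M : ℝ}
    (hM : M ∈ upperBounds ((fun x => ∑ j, |x j|) '' s)) {u v : ι → ℝ} (hu : u ∈ s) (hv : v ∈ s) :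
    ∑ j, |u j - v j| ≤ 2 * M := by
  have hsum : ∑ j, |u j - v j| ≤ ∑ j, |u j| + ∑ j, |v j| := by
    rw [← sum_add_distrib]
    exact sum_le_sum fun j _ => abs_sub _ _
  linarith [hM (Set.mem_image_of_mem _ hu), hM (Set.mem_image_of_mem _ hv)]

/-- The price of the linear perturbation: coordinates of `θ` above the threshold `a` are paid
in full, the others at most `a` per unit of `ℓ¹` distance. -/
theorem sum_mul_sub_sum_mul_le (θ u v : ι → ℝ) {a D : ℝ} (ha : 0 ≤ a)
    (huv : ∑ j, |u j - v j| ≤ D) :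
    ∑ j, θ j * u j - ∑ j, θ j * v j ≤ D * a + D * ∑ j, max (|θ j| - a) 0 := by
  have hcoord : ∀ j, θ j * u j - θ j * v j ≤ a * |u j - v j| + D * max (|θ j| - a) 0 := by
    intro j
    have hj : |u j - v j| ≤ D :=
      (single_le_sum (fun j _ => abs_nonneg (u j - v j)) (mem_univ j)).trans huv
    have hθ : |θ j| ≤ a + max (|θ j| - a) 0 := by linarith [le_max_left (|θ j| - a) 0]
    calc θ j * u j - θ j * v j ≤ |θ j| * |u j - v j| := by
          rw [← mul_sub, ← abs_mul]; exact le_abs_self _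
      _ ≤ (a + max (|θ j| - a) 0) * |u j - v j| := by gcongr
      _ ≤ a * |u j - v j| + D * max (|θ j| - a) 0 := by
          rw [add_mul, mul_comm D (max _ _)]; gcongr
  calc ∑ j, θ j * u j - ∑ j, θ j * v j
      ≤ ∑ j, (a * |u j - v j| + D * max (|θ j| - a) 0) := by
        rw [← sum_sub_distrib]; exact sum_le_sum fun j _ => hcoord j
    _ ≤ D * a + D * ∑ j, max (|θ j| - a) 0 := by
        rw [sum_add_distrib, ← mul_sum, ← mul_sum, mul_comm D a]
        gcongr

variable {𝒳 : Set (ι → ℝ)} {𝒴 : Set (κ → ℝ)} (ℓ : ℕ → (ι → ℝ) → (κ → ℝ) → ℝ) {G : ℝ}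

theorem sum_Ico_le_sSup_add_stability {t : ℕ} (ht : 1 ≤ t)
    (hGx : ∀ n, 1 ≤ n → n < t → ∀ y ∈ 𝒴, ∀ x x' : ι → ℝ,
      |ℓ n x y - ℓ n x' y| ≤ G * ∑ j, |x j - x' j|)
    (hGy : ∀ n, 1 ≤ n → n < t → ∀ x ∈ 𝒳, ∀ y ∈ 𝒴, ∀ y' ∈ 𝒴,
      |ℓ n x y - ℓ n x y'| ≤ G * ∑ i, |y i - y' i|)
    (θ : ι → ℝ) (X : ℕ → ι → ℝ) (Y Y' : ℕ → κ → ℝ)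
    (hXY : ∀ n, 1 ≤ n → n ≤ t → IsGlobalMinimaxOn
      (fun x y => (∑ m ∈ Ico 1 n, ℓ m x y) - ∑ j, θ j * x j) 𝒳 𝒴 (X n) (Y n))
    (hY' : ∀ n, 1 ≤ n → n < t →
      Y' n ∈ 𝒴 ∧ IsMaxOn (fun y => ∑ m ∈ Ico 1 n, ℓ m (X (n + 1)) y) 𝒴 (Y' n))
    {x : ι → ℝ} (hx : x ∈ 𝒳) (hbdd : BddAbove ((fun y => ∑ n ∈ Ico 1 t, ℓ n x y) '' 𝒴)) :
    ∑ n ∈ Ico 1 t, ℓ n (X n) (Y n)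
      ≤ sSup ((fun y => ∑ n ∈ Ico 1 t, ℓ n x y) '' 𝒴)
        + G * ∑ n ∈ Ico 1 t, ((∑ j, |X n j - X (n + 1) j|) + (∑ i, |Y n i - Y (n + 1) i|)
            + ∑ i, |Y' n i - Y (n + 1) i|)
        + (∑ j, θ j * X 1 j - ∑ j, θ j * x j) := by
  have hstab : ∀ n ∈ Ico 1 t, ℓ n (X n) (Y n) ≤ ℓ n (X (n + 1)) (Y' n)
      + G * ((∑ j, |X n j - X (n + 1) j|) + (∑ i, |Y n i - Y (n + 1) i|)
        + ∑ i, |Y' n i - Y (n + 1) i|) := by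
    intro n hn
    obtain ⟨h1, h2⟩ := mem_Ico.1 hn
    obtain ⟨-, hYn, -⟩ := hXY n h1 h2.le
    obtain ⟨hXn', hYn', -⟩ := hXY (n + 1) (by omega) h2
    have hΔX := (abs_le.1 (hGx n h1 h2 (Y n) hYn (X n) (X (n + 1)))).2
    have hΔY := (abs_le.1 (hGy n h1 h2 _ hXn' (Y n) hYn (Y (n + 1)) hYn')).2
    have hΔY' := (abs_le.1 (hGy n h1 h2 _ hXn' (Y' n) (hY' n h1 h2).1 (Y (n + 1)) hYn')).1
    linarith
  obtain ⟨-, hYt, -, hmin⟩ := hXY t ht le_rfl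
  have hleader := sum_Ico_sub_le_of_isGlobalMinimaxOn ℓ _ X Y Y' ht hXY hY'
  have hcompare := (hmin x hx).trans (csSup_image_sub_const_le ⟨_, hYt⟩ hbdd _)
  calc ∑ n ∈ Ico 1 t, ℓ n (X n) (Y n)
      ≤ ∑ n ∈ Ico 1 t, (ℓ n (X (n + 1)) (Y' n) + G * ((∑ j, |X n j - X (n + 1) j|)
          + (∑ i, |Y n i - Y (n + 1) i|) + ∑ i, |Y' n i - Y (n + 1) i|)) := sum_le_sum hstab
    _ ≤ _ := by
        rw [sum_add_distrib, ← mul_sum]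
        linarith

theorem sum_Ico_le_sSup_add_stability_add_tail {t : ℕ}
    (hGx : ∀ n, 1 ≤ n → n < t → ∀ y ∈ 𝒴, ∀ x x' : ι → ℝ,
      |ℓ n x y - ℓ n x' y| ≤ G * ∑ j, |x j - x' j|)
    (hGy : ∀ n, 1 ≤ n → n < t → ∀ x ∈ 𝒳, ∀ y ∈ 𝒴, ∀ y' ∈ 𝒴,
      |ℓ n x y - ℓ n x y'| ≤ G * ∑ i, |y i - y' i|)
    (θ : ι → ℝ) (X : ℕ → ι → ℝ) (Y Y' : ℕ → κ → ℝ)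
    (hXY : ∀ n, 1 ≤ n → n ≤ t → IsGlobalMinimaxOn
      (fun x y => (∑ m ∈ Ico 1 n, ℓ m x y) - ∑ j, θ j * x j) 𝒳 𝒴 (X n) (Y n))
    (hY' : ∀ n, 1 ≤ n → n < t →
      Y' n ∈ 𝒴 ∧ IsMaxOn (fun y => ∑ m ∈ Ico 1 n, ℓ m (X (n + 1)) y) 𝒴 (Y' n))
    {D a : ℝ} (hD : ∀ u ∈ 𝒳, ∀ v ∈ 𝒳, ∑ j, |u j - v j| ≤ D) (ha : 0 ≤ a)
    {x : ι → ℝ} (hx : x ∈ 𝒳) (hbdd : BddAbove ((fun y => ∑ n ∈ Ico 1 t, ℓ n x y) '' 𝒴)) :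
    ∑ n ∈ Ico 1 t, ℓ n (X n) (Y n)
      ≤ sSup ((fun y => ∑ n ∈ Ico 1 t, ℓ n x y) '' 𝒴)
        + G * ∑ n ∈ Ico 1 t, ((∑ j, |X n j - X (n + 1) j|) + (∑ i, |Y n i - Y (n + 1) i|)
            + ∑ i, |Y' n i - Y (n + 1) i|)
        + (D * a + D * ∑ j, max (|θ j| - a) 0) := by
  rcases Nat.eq_zero_or_pos t with rfl | ht
  · have hD0 : 0 ≤ D := by simpa using hD x hx x hx
    have htail : 0 ≤ ∑ j, max (|θ j| - a) 0 := sum_nonneg fun j _ => le_max_right _ _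
    simp only [Ico_eq_empty_of_le zero_le_one, sum_empty, mul_zero, add_zero]
    have hsup : 0 ≤ sSup ((fun _ => (0 : ℝ)) '' 𝒴) :=
      Real.sSup_nonneg <| Set.forall_mem_image.2 fun _ _ => le_rfl
    linarith [mul_nonneg hD0 ha, mul_nonneg hD0 htail]
  · have hX1 := (hXY 1 le_rfl ht).1
    linarith [sum_Ico_le_sSup_add_stability ℓ ht hGx hGy θ X Y Y' hXY hY' hx hbdd,
      sum_mul_sub_sum_mul_le θ (X 1) x ha (hD _ hX1 x hx)]

end Regret

section Integrability

variable {Ω : Type*} [MeasurableSpace Ω] {μ : Measure Ω}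

theorem sum_abs_sub_le_card_mul_dist {ι : Type*} [Fintype ι] (x x' : ι → ℝ) :
    ∑ j, |x j - x' j| ≤ Fintype.card ι * dist x x' := by
  calc ∑ j, |x j - x' j| ≤ ∑ _j : ι, dist x x' :=
        sum_le_sum fun j _ => (Real.dist_eq (x j) (x' j)).symm.trans_le (dist_le_pi_dist x x' j)
    _ = Fintype.card ι * dist x x' := by simp

theorem continuousOn_uncurry_of_abs_sub_le {ι κ : Type*} [Fintype ι] [Fintype κ]
    {s : Set (ι → ℝ)} {u : Set (κ → ℝ)} {g : (ι → ℝ) → (κ → ℝ) → ℝ} {G : ℝ}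
    (hx : ∀ y ∈ u, ∀ x ∈ s, ∀ x' ∈ s, |g x y - g x' y| ≤ G * ∑ j, |x j - x' j|)
    (hy : ∀ x ∈ s, ∀ y ∈ u, ∀ y' ∈ u, |g x y - g x y'| ≤ G * ∑ i, |y i - y' i|) :
    ContinuousOn (Function.uncurry g) (s ×ˢ u) := by
  refine (LipschitzOnWith.of_dist_le'
    (K := |G| * (Fintype.card ι + Fintype.card κ)) ?_).continuousOn
  rintro ⟨x, y⟩ ⟨hxs, hyu⟩ ⟨x', y'⟩ ⟨hxs', hyu'⟩
  have hdx : dist x x' ≤ dist (x, y) (x', y') := le_max_left _ _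
  have hdy : dist y y' ≤ dist (x, y) (x', y') := le_max_right _ _
  have habs : ∀ {δ : ℝ}, 0 ≤ δ → G * δ ≤ |G| * δ := fun hδ =>
    mul_le_mul_of_nonneg_right (le_abs_self G) hδ
  rw [Function.uncurry_apply_pair, Function.uncurry_apply_pair, Real.dist_eq]
  calc |g x y - g x' y'| ≤ |g x y - g x' y| + |g x' y - g x' y'| := abs_sub_le _ _ _
    _ ≤ |G| * ∑ j, |x j - x' j| + |G| * ∑ i, |y i - y' i| := by
        gcongr
        · exact (hx y hyu x hxs x' hxs').trans (habs (by positivity))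
        · exact (hy x' hxs' y hyu y' hyu').trans (habs (by positivity))
    _ ≤ |G| * (Fintype.card ι * dist (x, y) (x', y'))
          + |G| * (Fintype.card κ * dist (x, y) (x', y')) := by
        gcongr
        · exact (sum_abs_sub_le_card_mul_dist x x').trans (by gcongr)
        · exact (sum_abs_sub_le_card_mul_dist y y').trans (by gcongr)
    _ = |G| * (Fintype.card ι + Fintype.card κ) * dist (x, y) (x', y') := by ring

theorem integrable_comp_of_continuousOn [IsFiniteMeasure μ] {E : Type*} [TopologicalSpace E]
    [MeasurableSpace E] [OpensMeasurableSpace E] {K : Set E} (hK : IsCompact K) {F : E → ℝ}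
    (hF : ContinuousOn F K) {φ : Ω → E} (hφ : Measurable φ) (hφK : ∀ ω, φ ω ∈ K) :
    Integrable (fun ω => F (φ ω)) μ := by
  obtain ⟨C, hC⟩ := hK.exists_bound_of_continuousOn hF
  have hmeas : Measurable fun ω => F (φ ω) :=
    hF.domRestrict.measurable.comp (hφ.subtype_mk (h := hφK))
  exact Integrable.of_bound hmeas.aestronglyMeasurable C (ae_of_all _ fun ω => hC _ (hφK ω))

theorem integrable_sum_abs_sub_comp [IsFiniteMeasure μ] {ι : Type*} [Fintype ι]
    {s : Set (ι → ℝ)} (hs : IsCompact s) {u v : Ω → ι → ℝ} (hu : Measurable u)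
    (hv : Measurable v) (hus : ∀ ω, u ω ∈ s) (hvs : ∀ ω, v ω ∈ s) :
    Integrable (fun ω => ∑ j, |u ω j - v ω j|) μ :=
  integrable_comp_of_continuousOn (F := fun p : (ι → ℝ) × (ι → ℝ) => ∑ j, |p.1 j - p.2 j|)
    (hs.prod hs) (by fun_prop) (hu.prodMk hv) fun ω => ⟨hus ω, hvs ω⟩

theorem integrable_posPart_abs_sub_of_map_eq_expMeasure {Z : Ω → ℝ} (hZ : Measurable Z)
    {r a : ℝ} (hr : 0 < r) (ha : 0 ≤ a) (hlaw : μ.map Z = expMeasure r) :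
    Integrable (fun ω => max (|Z ω| - a) 0) μ := by
  have h := integrable_posPart_abs_sub_expMeasure a ha hr
  rw [← hlaw] at h
  exact (integrable_map_measure (by fun_prop) hZ.aemeasurable).1 h

theorem integral_posPart_abs_sub_of_map_eq_expMeasure {Z : Ω → ℝ} (hZ : Measurable Z)
    {r a : ℝ} (hr : 0 < r) (ha : 0 ≤ a) (hlaw : μ.map Z = expMeasure r) :
    ∫ ω, max (|Z ω| - a) 0 ∂μ = Real.exp (-(r * a)) / r := by
  rw [← integral_posPart_abs_sub_expMeasure a ha hr, ← hlaw,
    integral_map hZ.aemeasurable (by fun_prop)]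

/-- With the threshold `log d / r` each of the `d` coordinates contributes `1 / (d r)`. -/
theorem integral_sum_posPart_abs_sub_log_div {d : ℕ} (hd : 0 < d) {θ : Ω → Fin d → ℝ}
    (hθ : Measurable θ) {r : ℝ} (hr : 0 < r)
    (hlaw : ∀ k, μ.map (fun ω => θ ω k) = expMeasure r) :
    Integrable (fun ω => ∑ j, max (|θ ω j| - Real.log d / r) 0) μ ∧
      ∫ ω, ∑ j, max (|θ ω j| - Real.log d / r) 0 ∂μ = 1 / r := by
  have ha : 0 ≤ Real.log d / r := div_nonneg (Real.log_natCast_nonneg d) hr.le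
  have hθj : ∀ j, Measurable fun ω => θ ω j := fun j => (measurable_pi_apply j).comp hθ
  have hj : ∀ j, ∫ ω, max (|θ ω j| - Real.log d / r) 0 ∂μ = 1 / (d * r) := fun j => by
    rw [integral_posPart_abs_sub_of_map_eq_expMeasure (hθj j) hr ha (hlaw j),
      mul_div_cancel₀ _ hr.ne', Real.exp_neg, Real.exp_log (by exact_mod_cast hd)]
    field_simp
  have hint := fun j (_ : j ∈ univ) =>
    integrable_posPart_abs_sub_of_map_eq_expMeasure (hθj j) hr ha (hlaw j)
  refine ⟨integrable_finsetSum _ hint, ?_⟩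
  rw [integral_finsetSum _ hint]
  simp only [hj, sum_const, card_univ, Fintype.card_fin, nsmul_eq_mul]
  field_simp

theorem integral_le_add_mul_sum_add [IsProbabilityMeasure μ] {F P : Ω → ℝ}
    {A B C : ℕ → Ω → ℝ} {s : Finset ℕ} {c G D a : ℝ}
    (hF : Integrable F μ) (hA : ∀ n ∈ s, Integrable (A n) μ) (hB : ∀ n ∈ s, Integrable (B n) μ)
    (hC : ∀ n ∈ s, Integrable (C n) μ) (hP : Integrable P μ)
    (h : ∀ ω, F ω ≤ c + G * ∑ n ∈ s, (A n ω + B n ω + C n ω) + (D * a + D * P ω)) :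
    ∫ ω, F ω ∂μ ≤ c + G * ∑ n ∈ s, ((∫ ω, A n ω ∂μ) + (∫ ω, B n ω ∂μ) + ∫ ω, C n ω ∂μ)
      + (D * a + D * ∫ ω, P ω ∂μ) := by
  have hsplit : ∀ n ∈ s, ∫ ω, (A n ω + B n ω + C n ω) ∂μ
      = (∫ ω, A n ω ∂μ) + (∫ ω, B n ω ∂μ) + ∫ ω, C n ω ∂μ := fun n hn => by
    have hAB : Integrable (fun ω => A n ω + B n ω) μ := (hA n hn).add (hB n hn)
    rw [integral_add hAB (hC n hn), integral_add (hA n hn) (hB n hn)]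
  have hABC : ∀ n ∈ s, Integrable (fun ω => A n ω + B n ω + C n ω) μ :=
    fun n hn => ((hA n hn).add (hB n hn)).add (hC n hn)
  have hS := integrable_finsetSum s hABC
  have hcS : Integrable (fun ω => c + G * ∑ n ∈ s, (A n ω + B n ω + C n ω)) μ :=
    (integrable_const c).add (hS.const_mul G)
  have hDP : Integrable (fun ω => D * a + D * P ω) μ := (integrable_const _).add (hP.const_mul D)
  calc ∫ ω, F ω ∂μ
      ≤ ∫ ω, (c + G * ∑ n ∈ s, (A n ω + B n ω + C n ω) + (D * a + D * P ω)) ∂μ :=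
        integral_mono hF (hcS.add hDP) h
    _ = _ := by
        rw [integral_add hcS hDP, integral_add (integrable_const c) (hS.const_mul G),
          integral_add (integrable_const _) (hP.const_mul D)]
        simp only [integral_const, probReal_univ, one_smul]
        rw [integral_const_mul, integral_const_mul, integral_finsetSum s hABC,
          sum_congr rfl hsplit]

end Integrability

theorem integral_sum_Ico_le_sSup_add_stability_add_tail {ι κ Ω : Type*} [Fintype ι] [Fintype κ]
    [MeasurableSpace Ω] {μ : Measure Ω} [IsProbabilityMeasure μ]
    {𝒳 : Set (ι → ℝ)} {𝒴 : Set (κ → ℝ)} (h𝒳 : IsCompact 𝒳) (h𝒴 : IsCompact 𝒴)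
    (ℓ : ℕ → (ι → ℝ) → (κ → ℝ) → ℝ) {G : ℝ} {t T : ℕ} (ht : t ≤ T)
    (hGx : ∀ n, 1 ≤ n → n ≤ T → ∀ y ∈ 𝒴, ∀ x x' : ι → ℝ,
      |ℓ n x y - ℓ n x' y| ≤ G * ∑ j, |x j - x' j|)
    (hGy : ∀ n, 1 ≤ n → n ≤ T → ∀ x ∈ 𝒳, ∀ y ∈ 𝒴, ∀ y' ∈ 𝒴,
      |ℓ n x y - ℓ n x y'| ≤ G * ∑ i, |y i - y' i|)
    {θ : Ω → ι → ℝ} (hθ : Measurable θ) {X : ℕ → (ι → ℝ) → ι → ℝ} {Y Y' : ℕ → (ι → ℝ) → κ → ℝ}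
    (hXm : ∀ n, Measurable (X n)) (hYm : ∀ n, Measurable (Y n)) (hY'm : ∀ n, Measurable (Y' n))
    (hXY : ∀ n, 1 ≤ n → n ≤ T → ∀ θv : ι → ℝ, IsGlobalMinimaxOn
      (fun x y => (∑ m ∈ Ico 1 n, ℓ m x y) - ∑ j, θv j * x j) 𝒳 𝒴 (X n θv) (Y n θv))
    (hY' : ∀ n, 1 ≤ n → n ≤ T → ∀ θv : ι → ℝ,
      Y' n θv ∈ 𝒴 ∧ IsMaxOn (fun y => ∑ m ∈ Ico 1 n, ℓ m (X (n + 1) θv) y) 𝒴 (Y' n θv))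
    {D a : ℝ} (hD : ∀ u ∈ 𝒳, ∀ v ∈ 𝒳, ∑ j, |u j - v j| ≤ D) (ha : 0 ≤ a)
    (hP : Integrable (fun ω => ∑ j, max (|θ ω j| - a) 0) μ) {x : ι → ℝ} (hx : x ∈ 𝒳) :
    ∫ ω, ∑ n ∈ Ico 1 t, ℓ n (X n (θ ω)) (Y n (θ ω)) ∂μ
      ≤ sSup ((fun y => ∑ n ∈ Ico 1 t, ℓ n x y) '' 𝒴)
        + G * ∑ n ∈ Ico 1 t, ((∫ ω, ∑ j, |X n (θ ω) j - X (n + 1) (θ ω) j| ∂μ)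
            + (∫ ω, ∑ i, |Y n (θ ω) i - Y (n + 1) (θ ω) i| ∂μ)
            + ∫ ω, ∑ i, |Y' n (θ ω) i - Y (n + 1) (θ ω) i| ∂μ)
        + (D * a + D * ∫ ω, ∑ j, max (|θ ω j| - a) 0 ∂μ) := by
  have hidx : ∀ n ∈ Ico 1 t, 1 ≤ n ∧ n ≤ T ∧ 1 ≤ n + 1 ∧ n + 1 ≤ T := fun n hn => by
    rw [mem_Ico] at hn; omega
  have hmem : ∀ n ∈ Ico 1 t, ∀ ω, X n (θ ω) ∈ 𝒳 ∧ X (n + 1) (θ ω) ∈ 𝒳 ∧ Y n (θ ω) ∈ 𝒴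
      ∧ Y (n + 1) (θ ω) ∈ 𝒴 ∧ Y' n (θ ω) ∈ 𝒴 := fun n hn ω => by
    obtain ⟨h1, h2, h1', h2'⟩ := hidx n hn
    exact ⟨(hXY n h1 h2 _).1, (hXY _ h1' h2' _).1, (hXY n h1 h2 _).2.1, (hXY _ h1' h2' _).2.1,
      (hY' n h1 h2 _).1⟩
  have hcont : ∀ n ∈ Ico 1 t, ContinuousOn (Function.uncurry (ℓ n)) (𝒳 ×ˢ 𝒴) :=
    fun n hn => continuousOn_uncurry_of_abs_sub_le
      (fun y hy x _ x' _ => hGx n (hidx n hn).1 (hidx n hn).2.1 y hy x x')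
      (hGy n (hidx n hn).1 (hidx n hn).2.1)
  have hbdd : BddAbove ((fun y => ∑ n ∈ Ico 1 t, ℓ n x y) '' 𝒴) :=
    h𝒴.bddAbove_image <| continuousOn_finsetSum _ fun n hn =>
      (hcont n hn).comp (Continuous.prodMk_right x).continuousOn fun y hy => ⟨hx, hy⟩
  have hθX : ∀ n, Measurable fun ω => X n (θ ω) := fun n => (hXm n).comp hθ
  have hθY : ∀ n, Measurable fun ω => Y n (θ ω) := fun n => (hYm n).comp hθ
  refine integral_le_add_mul_sum_add
    (integrable_finsetSum _ fun n hn => integrable_comp_of_continuousOn (h𝒳.prod h𝒴)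
      (hcont n hn) ((hθX n).prodMk (hθY n)) fun ω => ⟨(hmem n hn ω).1, (hmem n hn ω).2.2.1⟩)
    (fun n hn => integrable_sum_abs_sub_comp h𝒳 (hθX n) (hθX (n + 1))
      (fun ω => (hmem n hn ω).1) (fun ω => (hmem n hn ω).2.1))
    (fun n hn => integrable_sum_abs_sub_comp h𝒴 (hθY n) (hθY (n + 1))
      (fun ω => (hmem n hn ω).2.2.1) (fun ω => (hmem n hn ω).2.2.2.1))
    (fun n hn => integrable_sum_abs_sub_comp h𝒴 ((hY'm n).comp hθ) (hθY (n + 1))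
      (fun ω => (hmem n hn ω).2.2.2.2) (fun ω => (hmem n hn ω).2.2.2.1)) hP fun ω => ?_
  exact sum_Ico_le_sSup_add_stability_add_tail ℓ
    (fun n h1 h2 => hGx n h1 (h2.le.trans ht)) (fun n h1 h2 => hGy n h1 (h2.le.trans ht))
    (θ ω) (fun n => X n (θ ω)) (fun n => Y n (θ ω)) (fun n => Y' n (θ ω))
    (fun n h1 h2 => hXY n h1 (h2.trans ht) (θ ω)) (fun n h1 h2 => hY' n h1 (h2.le.trans ht) (θ ω))
    hD ha hx hbdd

theorem stmt_19_general
    (d I T : ℕ) (hd : 0 < d) (hT : 0 < T)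
    (𝒳 : Set (Fin d → ℝ)) (h𝒳ne : 𝒳.Nonempty) (h𝒳cp : IsCompact 𝒳)
    (xmax : ℝ) (hxmax : IsGreatest ((fun x => ∑ j, |x j|) '' 𝒳) xmax)
    (ymax : ℝ)
    (𝒴 : Set (Fin I → ℝ)) (h𝒴 : 𝒴 = {y | ∀ i, y i ∈ Set.Icc (0 : ℝ) ymax})
    (Lbar : ℕ → (Fin d → ℝ) → (Fin I → ℝ) → ℝ)
    -- `G`-Lipschitz continuity of `L̄ₙ` in each direction, w.r.t. the ℓ¹-norm
    (G : ℝ)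
    (hGx : ∀ n, 1 ≤ n → n ≤ T → ∀ y ∈ 𝒴, ∀ x x' : Fin d → ℝ,
      |Lbar n x y - Lbar n x' y| ≤ G * ∑ j, |x j - x' j|)
    (hGy : ∀ n, 1 ≤ n → n ≤ T → ∀ x ∈ 𝒳, ∀ y ∈ 𝒴, ∀ y' ∈ 𝒴,
      |Lbar n x y - Lbar n x y'| ≤ G * ∑ i, |y i - y' i|)
    -- probability space and the exponential perturbation vector `θ`
    (Ω : Type) [MeasureSpace Ω] [IsProbabilityMeasure (ℙ : Measure Ω)]
    (θ : Ω → Fin d → ℝ) (hθmeas : Measurable θ)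
    (hθdist : ∀ k : Fin d, Measure.map (fun ω => θ ω k) ℙ
      = expMeasure ((T : ℝ) ^ (-(2 : ℝ) / 3)))
    -- measurable selections of global minimax points of the perturbed offline oracles
    (X : ℕ → (Fin d → ℝ) → Fin d → ℝ) (Y : ℕ → (Fin d → ℝ) → Fin I → ℝ)
    (hXmeas : ∀ n, Measurable (X n)) (hYmeas : ∀ n, Measurable (Y n))
    (hXY : ∀ n, 1 ≤ n → n ≤ T → ∀ θv : Fin d → ℝ,
      X n θv ∈ 𝒳 ∧ Y n θv ∈ 𝒴 ∧
      (∀ y ∈ 𝒴,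
        (∑ m ∈ Finset.Ico 1 n, Lbar m (X n θv) y) - ∑ j, θv j * X n θv j
          ≤ (∑ m ∈ Finset.Ico 1 n, Lbar m (X n θv) (Y n θv)) - ∑ j, θv j * X n θv j) ∧
      (∀ x ∈ 𝒳,
        (∑ m ∈ Finset.Ico 1 n, Lbar m (X n θv) (Y n θv)) - ∑ j, θv j * X n θv j
          ≤ sSup ((fun y' => (∑ m ∈ Finset.Ico 1 n, Lbar m x y') - ∑ j, θv j * x j) '' 𝒴)))
    -- measurable selection `Yₙ″` of maximizers of `y ↦ Σ_{m<n} L̄ₘ(X_{n+1}(θ), y)` over `𝒴`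
    (Y'' : ℕ → (Fin d → ℝ) → Fin I → ℝ) (hY''meas : ∀ n, Measurable (Y'' n))
    (hY'' : ∀ n, 1 ≤ n → n ≤ T → ∀ θv : Fin d → ℝ,
      Y'' n θv ∈ 𝒴 ∧
      ∀ y ∈ 𝒴, ∑ m ∈ Finset.Ico 1 n, Lbar m (X (n + 1) θv) y
        ≤ ∑ m ∈ Finset.Ico 1 n, Lbar m (X (n + 1) θv) (Y'' n θv)) :
    ∀ t, t ≤ T →
      (∫ ω, ∑ n ∈ Finset.Ico 1 t, Lbar n (X n (θ ω)) (Y n (θ ω)) ∂ℙ)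
          - sInf ((fun x =>
              sSup ((fun y => ∑ n ∈ Finset.Ico 1 t, Lbar n x y) '' 𝒴)) '' 𝒳)
        ≤ G * (∑ n ∈ Finset.Ico 1 t,
              ((∫ ω, ∑ j, |X n (θ ω) j - X (n + 1) (θ ω) j| ∂ℙ)
                + (∫ ω, ∑ i, |Y n (θ ω) i - Y (n + 1) (θ ω) i| ∂ℙ)
                + ∫ ω, ∑ i, |Y'' n (θ ω) i - Y (n + 1) (θ ω) i| ∂ℙ))
            + 2 * (T : ℝ) ^ ((2 : ℝ) / 3) * (Real.log d + 1) * xmax := by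
  intro t ht
  set η : ℝ := (T : ℝ) ^ (-(2 : ℝ) / 3)
  have hη : 0 < η := by positivity
  have hηinv : 1 / η = (T : ℝ) ^ ((2 : ℝ) / 3) := by
    rw [one_div, ← Real.rpow_neg (Nat.cast_nonneg T), neg_div, neg_neg]
  obtain ⟨hintTail, hTail⟩ := integral_sum_posPart_abs_sub_log_div hd hθmeas hη hθdist
  have h𝒴cp : IsCompact 𝒴 := by
    convert isCompact_Icc (a := (0 : Fin I → ℝ)) (b := fun _ => ymax) using 1
    ext y
    simp [h𝒴, Pi.le_def, forall_and]
  rw [sub_le_comm]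
  refine le_csInf (h𝒳ne.image _) (Set.forall_mem_image.2 fun x hx => ?_)
  have h := integral_sum_Ico_le_sSup_add_stability_add_tail h𝒳cp h𝒴cp Lbar ht hGx hGy hθmeas
    hXmeas hYmeas hY''meas hXY hY'' (fun u hu v hv => sum_abs_sub_le_two_mul hxmax.2 hu hv)
    (div_nonneg (Real.log_natCast_nonneg d) hη.le) hintTail hx
  have htail : 2 * xmax * (Real.log d / η) + 2 * xmax * (1 / η)
      = 2 * (T : ℝ) ^ ((2 : ℝ) / 3) * (Real.log d + 1) * xmax := by
    rw [← hηinv]; ring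
  rw [hTail] at h
  linarith

/-- first inequality of Lemma 2, perturbed WESC regret bound:
`E[Σ_{n<t} L̄ₙ(Xₙ,Yₙ)] − min_{x∈𝒳} max_{y∈𝒴} Σ_{n<t} L̄ₙ(x,y)
  ≤ G Σ_{n<t}(E‖Xₙ−X_{n+1}‖₁ + E‖Yₙ−Y_{n+1}‖₁ + E‖Yₙ″−Y_{n+1}‖₁)
    + 2 T^{2/3}(log d + 1) x_max`. -/
theorem stmt_19
    (d I T : ℕ) (hd : 0 < d) (hI : 0 < I) (hT : 0 < T)
    (𝒳 : Set (Fin d → ℝ)) (h𝒳ne : 𝒳.Nonempty) (h𝒳cp : IsCompact 𝒳)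
    (xmax : ℝ) (hxmax : IsGreatest ((fun x => ∑ j, |x j|) '' 𝒳) xmax)
    (ymax : ℝ) (hymax : 0 < ymax)
    (𝒴 : Set (Fin I → ℝ)) (h𝒴 : 𝒴 = {y | ∀ i, y i ∈ Set.Icc (0 : ℝ) ymax})
    (G0 : ℝ) (hG0 : 0 < G0)
    (f : ℕ → (Fin d → ℝ) → ℝ)
    (c : Fin I → ℕ → (Fin d → ℝ) → ℝ)
    (b : Fin I → ℝ) (hb : ∀ i, 0 ≤ b i)
    (hf : ∀ n, 1 ≤ n → n ≤ T → ∀ x x' : Fin d → ℝ,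
      |f n x - f n x'| ≤ G0 * ∑ j, |x j - x' j|)
    (hc : ∀ i n, 1 ≤ n → n ≤ T → ∀ x x' : Fin d → ℝ,
      |c i n x - c i n x'| ≤ G0 * ∑ j, |x j - x' j|)
    (lam : ℝ) (hlam : 0 < lam)
    (L : ℕ → (Fin d → ℝ) → (Fin I → ℝ) → ℝ)
    (hL : ∀ n x y, L n x y = f n x + ∑ i, y i * (c i n x - b i))
    (Lbar : ℕ → (Fin d → ℝ) → (Fin I → ℝ) → ℝ)
    (hLbar : ∀ n x y, Lbar n x y
      = L n x y + (lam / (n : ℝ) ^ ((1 : ℝ) / 9)) * ∑ i, Real.log (y i + 1))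
    -- `G`-Lipschitz continuity of `L̄ₙ` in each direction, w.r.t. the ℓ¹-norm
    (G : ℝ) (hG : 0 < G)
    (hGx : ∀ n, 1 ≤ n → n ≤ T → ∀ y ∈ 𝒴, ∀ x x' : Fin d → ℝ,
      |Lbar n x y - Lbar n x' y| ≤ G * ∑ j, |x j - x' j|)
    (hGy : ∀ n, 1 ≤ n → n ≤ T → ∀ x ∈ 𝒳, ∀ y ∈ 𝒴, ∀ y' ∈ 𝒴,
      |Lbar n x y - Lbar n x y'| ≤ G * ∑ i, |y i - y' i|)
    -- probability space and the exponential perturbation vector `θ`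
    (Ω : Type) [MeasureSpace Ω] [IsProbabilityMeasure (ℙ : Measure Ω)]
    (θ : Ω → Fin d → ℝ) (hθmeas : Measurable θ)
    (hθindep : iIndepFun (m := fun _ : Fin d => Real.measurableSpace) (fun k ω => θ ω k) ℙ)
    (hθdist : ∀ k : Fin d, Measure.map (fun ω => θ ω k) ℙ
      = expMeasure ((T : ℝ) ^ (-(2 : ℝ) / 3)))
    -- measurable selections of global minimax points of the perturbed offline oracles
    (X : ℕ → (Fin d → ℝ) → Fin d → ℝ) (Y : ℕ → (Fin d → ℝ) → Fin I → ℝ)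
    (hXmeas : ∀ n, Measurable (X n)) (hYmeas : ∀ n, Measurable (Y n))
    (hXY : ∀ n, 1 ≤ n → n ≤ T → ∀ θv : Fin d → ℝ,
      X n θv ∈ 𝒳 ∧ Y n θv ∈ 𝒴 ∧
      (∀ y ∈ 𝒴,
        (∑ m ∈ Finset.Ico 1 n, Lbar m (X n θv) y) - ∑ j, θv j * X n θv j
          ≤ (∑ m ∈ Finset.Ico 1 n, Lbar m (X n θv) (Y n θv)) - ∑ j, θv j * X n θv j) ∧
      (∀ x ∈ 𝒳,
        (∑ m ∈ Finset.Ico 1 n, Lbar m (X n θv) (Y n θv)) - ∑ j, θv j * X n θv j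
          ≤ sSup ((fun y' => (∑ m ∈ Finset.Ico 1 n, Lbar m x y') - ∑ j, θv j * x j) '' 𝒴)))
    -- measurable selection `Yₙ″` of maximizers of `y ↦ Σ_{m<n} L̄ₘ(X_{n+1}(θ), y)` over `𝒴`
    (Y'' : ℕ → (Fin d → ℝ) → Fin I → ℝ) (hY''meas : ∀ n, Measurable (Y'' n))
    (hY'' : ∀ n, 1 ≤ n → n ≤ T → ∀ θv : Fin d → ℝ,
      Y'' n θv ∈ 𝒴 ∧
      ∀ y ∈ 𝒴, ∑ m ∈ Finset.Ico 1 n, Lbar m (X (n + 1) θv) y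
        ≤ ∑ m ∈ Finset.Ico 1 n, Lbar m (X (n + 1) θv) (Y'' n θv)) :
    ∀ t, t ≤ T →
      (∫ ω, ∑ n ∈ Finset.Ico 1 t, Lbar n (X n (θ ω)) (Y n (θ ω)) ∂ℙ)
          - sInf ((fun x =>
              sSup ((fun y => ∑ n ∈ Finset.Ico 1 t, Lbar n x y) '' 𝒴)) '' 𝒳)
        ≤ G * (∑ n ∈ Finset.Ico 1 t,
              ((∫ ω, ∑ j, |X n (θ ω) j - X (n + 1) (θ ω) j| ∂ℙ)
                + (∫ ω, ∑ i, |Y n (θ ω) i - Y (n + 1) (θ ω) i| ∂ℙ)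
                + ∫ ω, ∑ i, |Y'' n (θ ω) i - Y (n + 1) (θ ω) i| ∂ℙ))
            + 2 * (T : ℝ) ^ ((2 : ℝ) / 3) * (Real.log d + 1) * xmax :=
  stmt_19_general d I T hd hT 𝒳 h𝒳ne h𝒳cp xmax hxmax ymax 𝒴 h𝒴 Lbar G hGx hGy Ω θ hθmeas hθdist X Y
    hXmeas hYmeas hXY Y'' hY''meas hY''
end
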